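/- arXiv:1706.04768 — 7 statements merged into one kernel-verified Lean document; each statement's English description precedes it below -/
import Mathlib

section
/- Let F be an m×n real matrix and set r = min{m,n}. Then det(I_n + FᵀF) = 1 + Σ_{k=1}^{r} Σ_{A ⊆ {1,…,m}, I ⊆ {1,…,n}, |A| = |I| = k} ([F]_{A,I})². In particular ξ(F) := det(I_n + FᵀF) is a sum of squares of the minors of F plus 1. -/
/-!
`det (1 + M)` is the sum of all principal minors of `M`, and by the Cauchy–Binet formula the
principal minor of `Fᵀ * F` on a column set `I` is the sum of the squares of the minors of `F`
with column set `I`. Grouping by size, the empty minor contributes the `1`, and minors of size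
`k > min m n` do not exist.
-/

open Matrix

/-- The minor of a real matrix `F` with respect to the row set `A` and column set `I`
(rows and columns taken in increasing order).  By convention `[F]_{∅,∅} = 1`. -/
noncomputable def mminor {m n : ℕ} (F : Matrix (Fin m) (Fin n) ℝ)
    (A : Finset (Fin m)) (I : Finset (Fin n)) : ℝ :=
  if h : A.card = I.card then
    Matrix.det (Matrix.of fun p q : Fin I.card =>
      F (A.orderEmbOfFin h p) (I.orderEmbOfFin rfl q))
  else 0

open Finset Set.powersetCard

theorem Finset.sum_injective_eq_sum_powersetCard_sum_perm {m M : Type*} [Fintype m]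
    [LinearOrder m] [AddCommMonoid M] {k : ℕ} (f : (Fin k → m) → M) :
    ∑ p with Function.Injective p, f p =
      ∑ s : Set.powersetCard m k, ∑ σ : Equiv.Perm (Fin k), f (ofFinEmbEquiv.symm s ∘ σ) := by
  rw [← Fintype.sum_prod_type']
  symm
  refine sum_bij (fun x _ => ofFinEmbEquiv.symm x.1 ∘ x.2) ?_ ?_ ?_ fun _ _ => rfl
  · intro x _
    simpa using (ofFinEmbEquiv.symm x.1).injective.comp x.2.injective
  · rintro ⟨s, σ⟩ - ⟨t, τ⟩ - h
    have hst : s = t := by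
      have hrange := congrArg Set.range h
      simp only [Set.range_comp, Equiv.range_eq_univ, Set.image_univ] at hrange
      ext a
      rw [mem_coe_iff, mem_coe_iff, ← mem_range_ofFinEmbEquiv_symm_iff_mem, hrange,
        mem_range_ofFinEmbEquiv_symm_iff_mem]
    subst hst
    simp only [Prod.mk.injEq, true_and]
    exact Equiv.ext fun i => (ofFinEmbEquiv.symm s).injective (congrFun h i)
  · intro p hp
    have hp : Function.Injective p := by simpa using hp
    let s : Set.powersetCard m k := ofCard (s := univ.image p) (by
      rw [card_image_of_injective _ hp, card_univ, Fintype.card_fin])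
    have hmem : ∀ i, ∃ j, ofFinEmbEquiv.symm s j = p i := fun i =>
      (mem_range_ofFinEmbEquiv_symm_iff_mem s (p i)).mpr (by simp [s, ← mem_coe_iff])
    choose σ hσ using hmem
    have hσ_inj : Function.Injective σ := fun i j hij => hp (by rw [← hσ i, ← hσ j, hij])
    exact ⟨(s, Equiv.ofBijective σ (Finite.injective_iff_bijective.mp hσ_inj)), mem_univ _,
      funext hσ⟩

theorem Finset.sum_sum_powersetCard_card_eq_sum_Icc {α β M : Type*} [Fintype α] [Fintype β]
    [DecidableEq β] [AddCommMonoid M] (g : Finset α → Finset β → M) :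
    ∑ I : Finset β, ∑ A ∈ powersetCard I.card univ, g A I =
      ∑ k ∈ Icc 0 (min (Fintype.card α) (Fintype.card β)),
        ∑ A ∈ powersetCard k univ, ∑ I ∈ powersetCard k univ, g A I := by
  have hswap : ∀ k, ∑ I ∈ powersetCard k univ, ∑ A ∈ powersetCard I.card univ, g A I =
      ∑ A ∈ powersetCard k univ, ∑ I ∈ powersetCard k univ, g A I := fun k => by
    rw [sum_comm]
    exact sum_congr rfl fun I hI => by rw [(mem_powersetCard.mp hI).2]
  rw [← powerset_univ, sum_powerset, card_univ, Nat.range_succ_eq_Icc_zero,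
    sum_congr rfl fun k _ => hswap k]
  refine (sum_subset (Icc_subset_Icc_right (min_le_right _ _)) fun k hk hk_min => ?_).symm
  have hk : Fintype.card α < k := by
    simp only [mem_Icc] at hk hk_min
    omega
  rw [powersetCard_eq_empty.mpr (by rwa [card_univ]), sum_empty]

namespace Matrix

variable {R ι m : Type*} [CommRing R] [Fintype ι] [DecidableEq ι]

theorem det_one_add_eq_sum_det_submatrix (M : Matrix ι ι R) :
    det (1 + M) = ∑ s : Finset ι, det (M.submatrix ((↑) : s → ι) (↑)) := by
  rw [add_comm]
  refine (detRowAlternating.map_add_univ M.row (1 : Matrix ι ι R).row).trans ?_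
  exact sum_congr rfl fun s _ => det_piecewise_one_eq_submatrix_det M s

theorem sum_perm_sign_mul_prod_eq_det (M : Matrix ι ι R) :
    ∑ σ : Equiv.Perm ι, (Equiv.Perm.sign σ : R) * ∏ i, M i (σ i) = det M := by
  rw [← det_transpose, det_apply']
  rfl

theorem det_submatrix_eq_zero_of_not_injective (N : Matrix m ι R) {p : ι → m}
    (hp : ¬Function.Injective p) : det (N.submatrix p id) = 0 := by
  obtain ⟨i, j, hpij, hij⟩ : ∃ i j, p i = p j ∧ i ≠ j := by
    simpa [Function.Injective] using hp
  exact det_zero_of_row_eq hij (by ext; simp [hpij])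

theorem det_mul_eq_sum_prod_mul_det_submatrix [Fintype m] (M : Matrix ι m R)
    (N : Matrix m ι R) :
    det (M * N) = ∑ p : ι → m, (∏ i, M i (p i)) * det (N.submatrix p id) := by
  have hrows : M * N = fun i => ∑ l, M i l • N l := by
    ext i j
    simp [mul_apply]
  rw [hrows]
  exact (detRowAlternating.toMultilinearMap.map_sum fun i l => M i l • N l).trans <|
    sum_congr rfl fun p _ => detRowAlternating.map_smul_univ (fun i => M i (p i)) _

/-- The **Cauchy–Binet formula**. -/
theorem det_mul_eq_sum_powersetCard [Fintype m] [LinearOrder m] {k : ℕ}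
    (M : Matrix (Fin k) m R) (N : Matrix m (Fin k) R) :
    det (M * N) = ∑ s : Set.powersetCard m k,
      det (M.submatrix id (ofFinEmbEquiv.symm s)) * det (N.submatrix (ofFinEmbEquiv.symm s) id) := by
  rw [det_mul_eq_sum_prod_mul_det_submatrix, ← sum_filter_of_ne fun p _ hp =>
      not_not.mp fun h => hp (by rw [det_submatrix_eq_zero_of_not_injective N h, mul_zero]),
    sum_injective_eq_sum_powersetCard_sum_perm]
  refine sum_congr rfl fun s _ => ?_
  set e := ofFinEmbEquiv.symm s
  have hperm : ∀ σ : Equiv.Perm (Fin k), det (N.submatrix (e ∘ σ) id) =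
      Equiv.Perm.sign σ * det (N.submatrix e id) := fun σ =>
    det_permute σ (N.submatrix e id)
  simp only [hperm, ← sum_perm_sign_mul_prod_eq_det (M.submatrix id e), sum_mul]
  refine sum_congr rfl fun σ _ => ?_
  simp only [Function.comp_apply, submatrix_apply, id]
  ring

end Matrix

theorem mminor_empty {m n : ℕ} (F : Matrix (Fin m) (Fin n) ℝ) : mminor F ∅ ∅ = 1 := by
  rw [mminor, dif_pos (by rw [card_empty, card_empty])]
  have : IsEmpty (Fin (∅ : Finset (Fin n)).card) := Fin.isEmpty'
  exact det_isEmpty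

theorem det_submatrix_transpose_mul_self_eq_sum_sq_mminor {m n : ℕ}
    (F : Matrix (Fin m) (Fin n) ℝ) (I : Finset (Fin n)) :
    det ((Fᵀ * F).submatrix ((↑) : I → Fin n) (↑)) =
      ∑ A ∈ powersetCard I.card univ, mminor F A I ^ 2 := by
  set G := F.submatrix id (I.orderEmbOfFin rfl)
  have hG : ((Fᵀ * F).submatrix ((↑) : I → Fin n) (↑)).submatrix (I.orderIsoOfFin rfl).toEquiv
      (I.orderIsoOfFin rfl).toEquiv = Gᵀ * G := by
    ext
    simp [G, mul_apply]
  rw [← det_submatrix_equiv_self (I.orderIsoOfFin rfl).toEquiv, hG, det_mul_eq_sum_powersetCard,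
    sum_subtype (powersetCard I.card univ) (p := (· ∈ Set.powersetCard (Fin m) I.card))
      (by simp [Set.powersetCard.mem_iff])]
  refine sum_congr rfl fun A _ => ?_
  rw [mminor, dif_pos (Set.powersetCard.card_eq A), sq, ← det_transpose]
  rfl

/-- `ξ(F) = det(I_n + FᵀF)` equals `1` plus the sum of the squares of all the minors of `F`:
it is a polyconvex function of `F`. -/
theorem det_one_add_transpose_mul_eq_one_add_sum_sq_minors (m n : ℕ)
    (F : Matrix (Fin m) (Fin n) ℝ) :
    (1 + Fᵀ * F).det =
      1 + ∑ k ∈ Finset.Icc 1 (min m n),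
            ∑ A ∈ Finset.powersetCard k (Finset.univ : Finset (Fin m)),
              ∑ I ∈ Finset.powersetCard k (Finset.univ : Finset (Fin n)),
                (mminor F A I) ^ 2 := by
  simp only [det_one_add_eq_sum_det_submatrix, det_submatrix_transpose_mul_self_eq_sum_sq_mminor,
    sum_sum_powersetCard_card_eq_sum_Icc, Fintype.card_fin]
  rw [← insert_Icc_add_one_left_eq_Icc (Nat.zero_le _), sum_insert (by simp)]
  simp [mminor_empty]
end

section
/- Let F : ℝⁿ → ℝ^{m×n} be a C² matrix-valued map satisfying the symmetry ∂_j F_{αi} = ∂_i F_{αj} for all 1 ≤ α ≤ m and 1 ≤ i,j ≤ n. Then for every k with 2 ≤ k ≤ min{m,n}+1, every A' = {α_1 < … < α_{k−1}} ⊆ {1,…,m} and every I = {i_1 < … < i_k} ⊆ {1,…,n}, the alternating divergence of the minors vanishes: Σ_{q=1}^{k} (−1)^q ∂_{i_q}( [F]_{A', I∖{i_q}} ) = 0 identically on ℝⁿ. -/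
/-- The partial derivative `∂_i f` of a function `f : ℝⁿ → ℝ`. -/
noncomputable def pd {n : ℕ} (i : Fin n) (f : (Fin n → ℝ) → ℝ) (x : Fin n → ℝ) : ℝ :=
  fderiv ℝ f x (Pi.single i 1)

open Finset Matrix

theorem Fin.sum_sum_succAbove_eq_zero {M : Type*} [AddCommGroup M] {d : ℕ}
    (T : Fin (d + 1) → Fin (d + 1) → M) (hT : ∀ i j, i ≠ j → T i j + T j i = 0) :
    ∑ i, ∑ r, T i (i.succAbove r) = 0 := by
  have h_erase (i : Fin (d + 1)) : ∑ r, T i (i.succAbove r) = ∑ j ∈ univ.erase i, T i j :=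
    add_left_cancel <| (Fin.sum_univ_succAbove (T i) i).symm.trans
      (add_sum_erase univ (T i) (mem_univ i)).symm
  simp_rw [h_erase, ← sum_finset_product' univ.offDiag univ (fun i => univ.erase i)
    (f := T) (by simp [and_comm, eq_comm])]
  exact sum_involution (fun p _ => p.swap) (fun p hp => hT _ _ (mem_offDiag.1 hp).2.2)
    (fun p hp _ h => (mem_offDiag.1 hp).2.2 (congrArg Prod.snd h))
    (fun p hp => mem_offDiag.2 (by simpa [eq_comm] using hp)) (fun p _ => p.swap_swap)

theorem Matrix.det_succAbove_add_det_succAbove_eq_zero {R : Type*} [CommRing R] {d : ℕ}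
    (M : Fin (d + 1) → Fin d → R) {i j : Fin (d + 1)} (hij : i ≠ j) (hM : M i = M j) :
    (-1) ^ (i : ℕ) * (of fun s => M (i.succAbove s)).det
      + (-1) ^ (j : ℕ) * (of fun s => M (j.succAbove s)).det = 0 := by
  -- border `M` by the indicator column of `{i, j}` and expand along it
  set N : Matrix (Fin (d + 1)) (Fin (d + 1)) R :=
    of fun t => Fin.cons (if t = i ∨ t = j then 1 else 0) (M t)
  have hN : N.det = 0 :=
    det_zero_of_row_eq hij <| funext <| Fin.cases (by simp [N]) (by simp [N, hM])
  have hsub (t : Fin (d + 1)) :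
      N.submatrix t.succAbove Fin.succ = of fun s => M (t.succAbove s) := rfl
  rw [det_succ_column_zero, Fintype.sum_eq_add i j hij] at hN
  · simpa [N, hij.symm, hsub] using hN
  · intro t ht
    simp [N, ht.1, ht.2]

theorem Matrix.sum_neg_one_pow_mul_sum_det_updateRow_succAbove_eq_zero {R : Type*} [CommRing R]
    {d : ℕ} (c : Fin (d + 1) → Fin d → R) (w : Fin (d + 1) → Fin (d + 1) → Fin d → R)
    (hw : ∀ i j, w i j = w j i) :
    ∑ i : Fin (d + 1), (-1) ^ ((i : ℕ) + 1) *
      ∑ r, ((of fun s => c (i.succAbove s)).updateRow r (w i (i.succAbove r))).det = 0 := by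
  set D : Fin (d + 1) → Fin (d + 1) → R := fun i j =>
    (of fun s => Function.update c j (w i j) (i.succAbove s)).det
  have hupdate (i : Fin (d + 1)) (r : Fin d) :
      ((of fun s => c (i.succAbove s)).updateRow r (w i (i.succAbove r))).det
        = D i (i.succAbove r) := by
    simp only [D, Function.update_apply_of_injective _ Fin.succAbove_right_injective]
    rfl
  have hpair (i j : Fin (d + 1)) (hij : i ≠ j) :
      (-1) ^ (i : ℕ) * D i j + (-1) ^ (j : ℕ) * D j i = 0 := by
    have h := det_succAbove_add_det_succAbove_eq_zero
      (Function.update (Function.update c i (w i j)) j (w i j)) hij (by simp [hij])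
    rw [Function.update_comm hij, Function.update_comp_eq_of_forall_ne' _ _ (Fin.succAbove_ne i),
      Function.update_comm hij.symm,
      Function.update_comp_eq_of_forall_ne' _ _ (Fin.succAbove_ne j)] at h
    simpa only [D, hw j i] using h
  simp_rw [hupdate, pow_succ, mul_neg_one, neg_mul, sum_neg_distrib, mul_sum]
  rw [Fin.sum_sum_succAbove_eq_zero _ hpair, neg_zero]

namespace Matrix

variable {𝕜 : Type*} [NontriviallyNormedField 𝕜] {ι : Type*} [Fintype ι] [DecidableEq ι]

-- `detRowAlternating` made continuous, so that `HasFDerivAt.multilinear_comp` applies to it.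
variable (𝕜 ι) in
noncomputable def detRowContinuousMultilinear :
    ContinuousMultilinearMap 𝕜 (fun _ : ι => ι → 𝕜) 𝕜 :=
  ∑ σ : Equiv.Perm ι, (Equiv.Perm.sign σ : ℤ) •
    (ContinuousMultilinearMap.mkPiAlgebra 𝕜 ι 𝕜).compContinuousLinearMap
      fun i => ContinuousLinearMap.proj (σ i)

theorem detRowContinuousMultilinear_apply (M : ι → ι → 𝕜) :
    detRowContinuousMultilinear 𝕜 ι M = (of M).det := by
  rw [← det_transpose, det_apply]
  simp [detRowContinuousMultilinear, Units.smul_def, zsmul_eq_mul]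

theorem fderiv_det_apply {E : Type*} [NormedAddCommGroup E] [NormedSpace 𝕜 E]
    {M : E → Matrix ι ι 𝕜} {x : E} (hM : ∀ i j, DifferentiableAt 𝕜 (fun y => M y i j) x) (v : E) :
    fderiv 𝕜 (fun y => (M y).det) x v
      = ∑ i, ((M x).updateRow i fun j => fderiv 𝕜 (fun y => M y i j) x v).det := by
  have hrow (i : ι) : HasFDerivAt (fun y => M y i)
      (ContinuousLinearMap.pi fun j => fderiv 𝕜 (fun y => M y i j) x) x :=
    hasFDerivAt_pi.2 fun j => (hM i j).hasFDerivAt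
  have hdet : (fun y => (M y).det) = fun y => detRowContinuousMultilinear 𝕜 ι fun i => M y i :=
    funext fun y => (detRowContinuousMultilinear_apply (M y)).symm
  rw [hdet, (HasFDerivAt.multilinear_comp _ hrow).fderiv]
  simp [detRowContinuousMultilinear_apply, updateRow]

end Matrix

theorem Finset.orderEmbOfFin_erase_orderEmbOfFin {α : Type*} [LinearOrder α] (s : Finset α)
    {d : ℕ} (h : s.card = d + 1) (i : Fin (d + 1))
    (h' : (s.erase (s.orderEmbOfFin h i)).card = d) (r : Fin d) :
    (s.erase (s.orderEmbOfFin h i)).orderEmbOfFin h' r = s.orderEmbOfFin h (i.succAbove r) := by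
  refine congrFun (orderEmbOfFin_unique h' (fun r => mem_erase.2 ⟨?_, orderEmbOfFin_mem s h _⟩)
    ((s.orderEmbOfFin h).strictMono.comp (Fin.strictMono_succAbove i))).symm r
  exact (s.orderEmbOfFin h).injective.ne (Fin.succAbove_ne i r)

theorem mminor_eq_det_orderEmbOfFin {m n d : ℕ} (G : Matrix (Fin m) (Fin n) ℝ)
    {A : Finset (Fin m)} {I : Finset (Fin n)} (hA : A.card = d) (hI : I.card = d) :
    mminor G A I = (of fun p q => G (A.orderEmbOfFin hA p) (I.orderEmbOfFin hI q)).det := by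
  subst hI
  rw [mminor, dif_pos hA]

-- Transposed, so that the columns of `G`, on which the symmetry hypothesis acts, become rows.
theorem mminor_erase_orderEmbOfFin {m n d : ℕ} (G : Matrix (Fin m) (Fin n) ℝ)
    {A : Finset (Fin m)} {I : Finset (Fin n)} (hA : A.card = d) (hI : I.card = d + 1)
    (i : Fin (d + 1)) :
    mminor G A (I.erase (I.orderEmbOfFin hI i))
      = (of fun r p => G (A.orderEmbOfFin hA p) (I.orderEmbOfFin hI (i.succAbove r))).det := by
  have hcard : (I.erase (I.orderEmbOfFin hI i)).card = d := by
    rw [card_erase_of_mem (orderEmbOfFin_mem I hI i), hI, Nat.add_sub_cancel]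
  rw [mminor_eq_det_orderEmbOfFin G hA hcard, ← det_transpose]
  simp only [transpose, I.orderEmbOfFin_erase_orderEmbOfFin hI i hcard]
  rfl

theorem alternating_divergence_of_minors_vanishes_general (m n : ℕ)
    (F : (Fin n → ℝ) → Matrix (Fin m) (Fin n) ℝ)
    (hF : ∀ α i, ContDiff ℝ 2 fun x => F x α i)
    (hsym : ∀ (x : Fin n → ℝ) (α : Fin m) (i j : Fin n),
      pd j (fun y => F y α i) x = pd i (fun y => F y α j) x)
    (k : ℕ)
    (A' : Finset (Fin m)) (I : Finset (Fin n))
    (hA' : A'.card = k - 1) (hI : I.card = k) (x : Fin n → ℝ) :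
    ∑ q : Fin k, (-1 : ℝ) ^ (q.val + 1) *
      pd (I.orderEmbOfFin hI q)
        (fun y => mminor (F y) A' (I.erase (I.orderEmbOfFin hI q))) x = 0 := by
  cases k with
  | zero => simp
  | succ d =>
  have hA : A'.card = d := hA'
  set a := A'.orderEmbOfFin hA
  set e := I.orderEmbOfFin hI
  have hderiv (i : Fin (d + 1)) :
      pd (e i) (fun y => mminor (F y) A' (I.erase (e i))) x
        = ∑ r, ((of fun s p => F x (a p) (e (i.succAbove s))).updateRow r
            fun p => pd (e i) (fun y => F y (a p) (e (i.succAbove r))) x).det := by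
    have hminor : (fun y => mminor (F y) A' (I.erase (e i)))
        = fun y => (of fun s p => F y (a p) (e (i.succAbove s))).det :=
      funext fun y => mminor_erase_orderEmbOfFin (F y) hA hI i
    rw [hminor]
    exact fderiv_det_apply
      (fun r p => ((hF (a p) (e (i.succAbove r))).differentiable two_ne_zero).differentiableAt) _
  simp_rw [hderiv]
  exact sum_neg_one_pow_mul_sum_det_updateRow_succAbove_eq_zero (fun j p => F x (a p) (e j))
    (fun i j p => pd (e i) (fun y => F y (a p) (e j)) x)
    fun i j => funext fun p => hsym x (a p) (e j) (e i)

/-- If `F : ℝⁿ → ℝ^{m×n}` is `C²` and satisfies `∂_j F_{αi} = ∂_i F_{αj}`, then for every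
`2 ≤ k ≤ min{m,n}+1`, every `A' ⊆ {1,…,m}` with `|A'| = k-1` and every
`I = {i₁ < … < i_k} ⊆ {1,…,n}`, the alternating divergence of the corresponding minors
vanishes: `Σ_{q=1}^{k} (−1)^q ∂_{i_q} ([F]_{A', I∖{i_q}}) = 0` on all of `ℝⁿ`. -/
theorem alternating_divergence_of_minors_vanishes (m n : ℕ)
    (F : (Fin n → ℝ) → Matrix (Fin m) (Fin n) ℝ)
    (hF : ∀ α i, ContDiff ℝ 2 fun x => F x α i)
    (hsym : ∀ (x : Fin n → ℝ) (α : Fin m) (i j : Fin n),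
      pd j (fun y => F y α i) x = pd i (fun y => F y α j) x)
    (k : ℕ) (hk1 : 2 ≤ k) (hk2 : k ≤ min m n + 1)
    (A' : Finset (Fin m)) (I : Finset (Fin n))
    (hA' : A'.card = k - 1) (hI : I.card = k) (x : Fin n → ℝ) :
    ∑ q : Fin k, (-1 : ℝ) ^ (q.val + 1) *
      pd (I.orderEmbOfFin hI q)
        (fun y => mminor (F y) A' (I.erase (I.orderEmbOfFin hI q))) x = 0 :=
  alternating_divergence_of_minors_vanishes_general m n F hF hsym k A' I hA' hI x
end

section
/- Let F be an m×n real matrix with m ≥ 2, set r = min{m,n}, and fix α, β ∈ {1,…,m}. Then the (α,β) minor of the m×m matrix I_m + FFᵀ obtained by deleting row α and column β satisfies [I_m + FFᵀ]_{{α}ᶜ,{β}ᶜ} = Σ_{k=1}^{min{m, r+1}} Σ_{A ⊆ {1,…,m}, |A| = k, α,β ∈ A} Σ_{I' ⊆ {1,…,n}, |I'| = k−1} (−1)^{O_A(α) + O_A(β) + α + β} [F]_{A∖{α}, I'} [F]_{A∖{β}, I'}. -/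
open Matrix Finset

/-- `O_A(a)`: the number of elements of `A ∪ {a}` that are `≤ a`. -/
def ordIdx {N : ℕ} (A : Finset (Fin N)) (a : Fin N) : ℕ :=
  ((insert a A).filter (fun x => x ≤ a)).card

/-!
Up to the sign `(-1)^(α+β)`, the minor is `det M'`, where `M'` is `1 + F Fᵀ` with row `α`
replaced by `e_β` (an adjugate entry). Now `M' = P Qᵀ` for the `m × (1 + m + n)` matrices
`Q = [e_β | 1 | F]` and `P = [e_α | 1 | F]` with row `α` replaced by the first unit vector.
By Cauchy–Binet, `det (P Qᵀ)` is a sum over `m`-sets `S` of columns. Only those `S` contribute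
that contain the first column and avoid the identity columns `α` and `β`; they consist of the
first column, the identity columns outside a set `A ∋ α, β`, and a set `I'` of `|A| - 1`
columns of `F`. Expanding along the identity columns and then along the first column turns the
maximal minors of `P` and `Q` on such an `S` into `(-1)^(O_A(α)+1) [F]_{A∖{α},I'}` and
`(-1)^(O_A(β)+1) [F]_{A∖{β},I'}`.
-/

section CauchyBinet

variable {R ι C : Type*} [CommRing R] [Fintype ι] [DecidableEq ι]

def mulTransposeOn (P Q : Matrix ι C R) (S : Finset C) : Matrix ι ι R :=
  of fun i j => ∑ c ∈ S, P i c * Q j c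

theorem det_mul_transpose_eq_sum_fun [Fintype C] (P Q : Matrix ι C R) :
    det (P * Qᵀ) = ∑ p : ι → C, (∏ i, Q i (p i)) * det (P.submatrix id p) := by
  simp only [det_apply', mul_apply, transpose_apply, prod_univ_sum, mul_sum,
    Fintype.piFinset_univ, submatrix_apply, id_eq]
  rw [sum_comm]
  refine sum_congr rfl fun p _ => sum_congr rfl fun σ _ => ?_
  rw [prod_mul_distrib]
  ring

theorem det_submatrix_eq_zero_of_not_injective (P : Matrix ι C R) {p : ι → C}
    (hp : ¬Function.Injective p) : det (P.submatrix id p) = 0 := by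
  obtain ⟨i, j, hpij, hij⟩ := Function.not_injective_iff.1 hp
  exact det_zero_of_column_eq hij fun r => by simp [hpij]

theorem det_mulTransposeOn [Fintype C] [DecidableEq C] (P Q : Matrix ι C R) (S : Finset C) :
    det (mulTransposeOn P Q S) = ∑ p ∈ univ.filter (fun p : ι → C => ∀ i, p i ∈ S),
      (∏ i, Q i (p i)) * det (P.submatrix id p) := by
  have h : mulTransposeOn P Q S =
      (P.submatrix id ((↑) : S → C) : Matrix ι S R) * (Q.submatrix id ((↑) : S → C))ᵀ := by
    ext i j
    simp only [mulTransposeOn, of_apply, mul_apply, submatrix_apply, transpose_apply, id_eq]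
    exact (sum_attach S _).symm
  rw [h, det_mul_transpose_eq_sum_fun,
    sum_subtype (p := fun p : ι → C => ∀ i, p i ∈ S) _ (fun p => by simp)]
  exact Fintype.sum_equiv Equiv.subtypePiEquivPi.symm _ _ fun p => rfl

theorem det_mul_transpose_eq_sum_powersetCard [Fintype C] [DecidableEq C] (P Q : Matrix ι C R) :
    det (P * Qᵀ) = ∑ S ∈ powersetCard (Fintype.card ι) univ, det (mulTransposeOn P Q S) := by
  simp_rw [det_mulTransposeOn, sum_filter]
  -- an injective `p` lies over exactly one `S`, its image; the other `p` contribute `0`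
  rw [sum_comm, det_mul_transpose_eq_sum_fun]
  refine sum_congr rfl fun p _ => ?_
  by_cases hp : Function.Injective p
  · have hmem : univ.image p ∈ powersetCard (Fintype.card ι) univ := by
      simp [card_image_of_injective _ hp]
    rw [sum_eq_single_of_mem _ hmem, if_pos fun i => mem_image_of_mem p (mem_univ i)]
    refine fun S hS hne => if_neg fun hpS => hne (eq_of_subset_of_card_le ?_ ?_).symm
    · rintro c hc
      obtain ⟨i, -, rfl⟩ := mem_image.1 hc
      exact hpS i
    · rw [mem_powersetCard_univ.1 hS, card_image_of_injective _ hp, card_univ]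
  · simp [det_submatrix_eq_zero_of_not_injective P hp]

theorem det_mulTransposeOn_map {D : Type*} [Fintype D] [DecidableEq D] (P Q : Matrix ι C R)
    (u : D ≃ ι) (e : D ↪ C) :
    det (mulTransposeOn P Q (univ.map e)) = det (P.submatrix u e) * det (Q.submatrix u e) := by
  have h : mulTransposeOn P Q (univ.map e) =
      (P.submatrix u e * (Q.submatrix u e)ᵀ).submatrix u.symm u.symm := by
    ext i j
    simp [mulTransposeOn, mul_apply]
  rw [h, det_submatrix_equiv_self, det_mul, det_transpose]

end CauchyBinet

section Minors

variable {R : Type*} [CommRing R]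

theorem det_eq_neg_one_pow_mul_det_of_col_zero_eq_single {t : ℕ}
    (B : Matrix (Fin (t + 1)) (Fin (t + 1)) R) (p : Fin (t + 1))
    (h : ∀ i, B i 0 = if i = p then 1 else 0) :
    det B = (-1) ^ (p : ℕ) * det (B.submatrix p.succAbove Fin.succ) := by
  rw [det_succ_column_zero, sum_eq_single p (fun i _ hi => by simp [h, hi]) (by simp), h,
    if_pos rfl, mul_one]

theorem mminor_compl_singleton {m : ℕ} (M : Matrix (Fin (m + 1)) (Fin (m + 1)) ℝ)
    (α β : Fin (m + 1)) :
    mminor M {α}ᶜ {β}ᶜ = det (M.submatrix α.succAbove β.succAbove) := by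
  have hcard : ({β}ᶜ : Finset (Fin (m + 1))).card = m := by simp [card_compl]
  rw [mminor, dif_pos (by simp [card_compl]), ← det_submatrix_equiv_self (finCongr hcard.symm)]
  congr 1
  ext p q
  simp [orderEmbOfFin_compl_singleton_apply]

theorem orderEmbOfFin_erase {N t : ℕ} {A : Finset (Fin N)} (h : A.card = t + 1) (p : Fin (t + 1))
    (h' : (A.erase (A.orderEmbOfFin h p)).card = t) (j : Fin t) :
    (A.erase (A.orderEmbOfFin h p)).orderEmbOfFin h' j = A.orderEmbOfFin h (p.succAbove j) := by
  refine congrFun (orderEmbOfFin_unique h' (fun x => ?_)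
    ((A.orderEmbOfFin h).strictMono.comp (Fin.strictMono_succAbove p))).symm j
  exact mem_erase.2 ⟨fun hx => Fin.succAbove_ne p x ((A.orderEmbOfFin h).injective hx),
    orderEmbOfFin_mem A h _⟩

theorem ordIdx_orderEmbOfFin {N t : ℕ} {A : Finset (Fin N)} (h : A.card = t) (p : Fin t) :
    ordIdx A (A.orderEmbOfFin h p) = p + 1 := by
  have himg : A.filter (· ≤ A.orderEmbOfFin h p) = (Iic p).map (A.orderEmbOfFin h).toEmbedding := by
    ext x
    simp only [mem_filter, mem_map, mem_Iic, RelEmbedding.coe_toEmbedding]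
    constructor
    · rintro ⟨hxA, hxle⟩
      obtain ⟨j, rfl⟩ : x ∈ Set.range (A.orderEmbOfFin h) := by rwa [range_orderEmbOfFin]
      exact ⟨j, (A.orderEmbOfFin h).le_iff_le.1 hxle, rfl⟩
    · rintro ⟨j, hj, rfl⟩
      exact ⟨orderEmbOfFin_mem A h j, (A.orderEmbOfFin h).le_iff_le.2 hj⟩
  rw [ordIdx, insert_eq_self.2 (orderEmbOfFin_mem A h p), himg, card_map, Fin.card_Iic]

end Minors

abbrev AugCol (m n : ℕ) := Unit ⊕ Fin m ⊕ Fin n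

section Augment

variable {R : Type*} [CommRing R] {m n : ℕ}

/-- The block matrix `[e_γ | 1 | F]`. -/
def augment (F : Matrix (Fin m) (Fin n) R) (γ : Fin m) : Matrix (Fin m) (AugCol m n) R :=
  of fun i => Sum.elim (fun _ => if i = γ then 1 else 0) (Sum.elim ((1 : Matrix _ _ R) i) (F i))

theorem updateRow_augment_mul_transpose_augment (F : Matrix (Fin m) (Fin n) R) (α β : Fin m) :
    (augment F α).updateRow α (Pi.single (Sum.inl ()) 1) * (augment F β)ᵀ =
      (1 + F * Fᵀ).updateRow α (Pi.single β 1) := by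
  ext i k
  rw [updateRow_mul]
  by_cases hi : i = α
  · subst hi
    simp [augment, Pi.single_apply, eq_comm]
  · simp [augment, mul_apply, Fintype.sum_sum_type, hi, one_apply]

theorem det_mulTransposeOn_augment_eq_zero (F : Matrix (Fin m) (Fin n) R) (α β : Fin m)
    {S : Finset (AugCol m n)} (hS : S.card = m)
    (hbad : ¬(Sum.inl () ∈ S ∧ Sum.inr (Sum.inl α) ∉ S ∧ Sum.inr (Sum.inl β) ∉ S)) :
    det (mulTransposeOn ((augment F α).updateRow α (Pi.single (Sum.inl ()) 1))
      (augment F β) S) = 0 := by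
  obtain u : S ≃ Fin m := Fintype.equivOfCardEq (by simp [hS])
  rw [← attach_map_val (s := S), ← univ_eq_attach, det_mulTransposeOn_map _ _ u]
  by_cases h0 : Sum.inl () ∈ S
  · by_cases hα : Sum.inr (Sum.inl α) ∈ S
    · refine mul_eq_zero_of_left (det_eq_zero_of_column_eq_zero ⟨_, hα⟩ fun i => ?_) _
      by_cases hi : u i = α <;> simp [augment, updateRow_apply, hi, one_apply]
    · have hβ : Sum.inr (Sum.inl β) ∈ S := by tauto
      refine mul_eq_zero_of_right _ (det_zero_of_column_eq (i := ⟨_, h0⟩) (j := ⟨_, hβ⟩)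
        (by simp) fun i => ?_)
      simp [augment, one_apply, eq_comm]
  · refine mul_eq_zero_of_left (det_eq_zero_of_row_eq_zero (u.symm α) fun c => ?_) _
    have hc : c.1 ≠ Sum.inl () := fun h => h0 (h ▸ c.2)
    simp [hc]

end Augment

section Good

variable {m n t : ℕ} {A : Finset (Fin m)} {I : Finset (Fin n)}

def colSet (A : Finset (Fin m)) (I : Finset (Fin n)) : Finset (AugCol m n) :=
  univ.disjSum (Aᶜ.disjSum I)

/- Rows ordered as `A` then `Aᶜ`, columns as the unit column, `I`, then the identity columns of
`Aᶜ`: on `colSet A I` both factors then become block lower triangular with an identity block. -/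
def rowEquiv (hA : A.card = t + 1) : Fin (t + 1) ⊕ {j // j ∉ A} ≃ Fin m :=
  (Equiv.sumCongr (A.orderIsoOfFin hA).toEquiv (Equiv.refl _)).trans (Equiv.sumCompl (· ∈ A))

@[simp] theorem rowEquiv_inl (hA : A.card = t + 1) (p : Fin (t + 1)) :
    rowEquiv hA (Sum.inl p) = A.orderEmbOfFin hA p := rfl

@[simp] theorem rowEquiv_inr (hA : A.card = t + 1) (j : {j // j ∉ A}) :
    rowEquiv hA (Sum.inr j) = j := rfl

def colEmb (A : Finset (Fin m)) (hI : I.card = t) : Fin (t + 1) ⊕ {j // j ∉ A} ↪ AugCol m n where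
  toFun := Sum.elim (Fin.cons (Sum.inl ()) fun j => Sum.inr (Sum.inr (I.orderEmbOfFin hI j)))
    fun j => Sum.inr (Sum.inl j.1)
  inj' := by
    refine Function.Injective.sumElim (Fin.cons_injective_iff.2 ⟨by simp, ?_⟩)
      (fun j j' h => Subtype.ext (by simpa using h)) fun p j => ?_
    · exact fun j j' h => (I.orderEmbOfFin hI).injective (by simpa using h)
    · cases p using Fin.cases <;> simp

@[simp] theorem colEmb_inl_zero (hI : I.card = t) :
    colEmb A hI (Sum.inl 0) = Sum.inl () := rfl

@[simp] theorem colEmb_inl_succ (hI : I.card = t) (j : Fin t) :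
    colEmb A hI (Sum.inl j.succ) = Sum.inr (Sum.inr (I.orderEmbOfFin hI j)) := rfl

@[simp] theorem colEmb_inr (hI : I.card = t) (j : {j // j ∉ A}) :
    colEmb A hI (Sum.inr j) = Sum.inr (Sum.inl j.1) := rfl

theorem map_colEmb (hI : I.card = t) : univ.map (colEmb A hI) = colSet A I := by
  have hI' : ∀ c, (∃ i, I.orderEmbOfFin hI i = c) ↔ c ∈ I :=
    Set.ext_iff.1 (range_orderEmbOfFin I hI)
  ext (_ | j | c) <;> simp [colSet, colEmb, Fin.exists_fin_succ, hI']

theorem det_submatrix_rowEquiv_colEmb (F : Matrix (Fin m) (Fin n) ℝ)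
    (W : Matrix (Fin m) (AugCol m n) ℝ) (hA : A.card = t + 1) (hI : I.card = t) (p : Fin (t + 1))
    (hunit : ∀ i, W i (Sum.inl ()) = if i = A.orderEmbOfFin hA p then 1 else 0)
    (hid : ∀ i, ∀ j ∉ A, W i (Sum.inr (Sum.inl j)) = if i = j then 1 else 0)
    (hF : ∀ i ≠ A.orderEmbOfFin hA p, ∀ c, W i (Sum.inr (Sum.inr c)) = F i c) :
    det (W.submatrix (rowEquiv hA) (colEmb A hI)) =
      (-1) ^ (p : ℕ) * mminor F (A.erase (A.orderEmbOfFin hA p)) I := by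
  subst hI
  set W' := W.submatrix (rowEquiv hA) (colEmb A rfl)
  have h₁₂ : W'.toBlocks₁₂ = 0 := by
    ext p' j
    simpa [W', toBlocks₁₂, hid _ _ j.2] using
      fun h : A.orderEmbOfFin hA p' = j => j.2 (h ▸ orderEmbOfFin_mem A hA p')
  have h₂₂ : W'.toBlocks₂₂ = 1 := by
    ext j j'
    simp [W', toBlocks₂₂, hid _ _ j'.2, one_apply, Subtype.ext_iff]
  rw [← fromBlocks_toBlocks W', h₁₂, h₂₂, det_fromBlocks_zero₁₂, det_one, mul_one,
    det_eq_neg_one_pow_mul_det_of_col_zero_eq_single _ p (fun i => by simp [W', toBlocks₁₁, hunit])]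
  congr 1
  have hcard : (A.erase (A.orderEmbOfFin hA p)).card = I.card := by
    simp [card_erase_of_mem, hA]
  rw [mminor, dif_pos hcard]
  congr 1
  ext j j'
  simpa [W', toBlocks₁₁, orderEmbOfFin_erase] using
    hF _ (fun h => Fin.succAbove_ne p j ((A.orderEmbOfFin hA).injective h)) _

theorem det_mulTransposeOn_augment_colSet (F : Matrix (Fin m) (Fin n) ℝ)
    {α β : Fin m} (hα : α ∈ A) (hβ : β ∈ A) (hAI : A.card = I.card + 1) :
    det (mulTransposeOn ((augment F α).updateRow α (Pi.single (Sum.inl ()) 1))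
      (augment F β) (colSet A I)) =
      (-1) ^ (ordIdx A α + ordIdx A β) * (mminor F (A.erase α) I * mminor F (A.erase β) I) := by
  have hrange : ∀ γ ∈ A, ∃ p, A.orderEmbOfFin hAI p = γ := fun γ hγ => by
    rwa [← Set.mem_range, range_orderEmbOfFin]
  obtain ⟨p, rfl⟩ := hrange α hα
  obtain ⟨q, rfl⟩ := hrange β hβ
  have hα_ne : ∀ j ∉ A, A.orderEmbOfFin hAI p ≠ j := fun j hj h =>
    hj (h ▸ orderEmbOfFin_mem A hAI p)
  rw [← map_colEmb rfl, det_mulTransposeOn_map _ _ (rowEquiv hAI),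
    det_submatrix_rowEquiv_colEmb F _ hAI rfl p ?_ ?_ ?_,
    det_submatrix_rowEquiv_colEmb F _ hAI rfl q ?_ ?_ ?_,
    ordIdx_orderEmbOfFin, ordIdx_orderEmbOfFin]
  · ring
  all_goals intros; simp_all [augment, updateRow_apply, one_apply]

end Good

section Reindex

variable {R : Type*} [AddCommMonoid R] {m n : ℕ}

def goodPairs (n : ℕ) (α β : Fin m) : Finset ((_ : Finset (Fin m)) × Finset (Fin n)) :=
  (univ.filter fun A => α ∈ A ∧ β ∈ A).sigma fun A => powersetCard (A.card - 1) univ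

theorem sum_powersetCard_eq_sum_goodPairs (α β : Fin m) (f : Finset (AugCol m n) → R)
    (hf : ∀ S ∈ powersetCard m univ,
      ¬(Sum.inl () ∈ S ∧ Sum.inr (Sum.inl α) ∉ S ∧ Sum.inr (Sum.inl β) ∉ S) → f S = 0) :
    ∑ S ∈ powersetCard m univ, f S = ∑ x ∈ goodPairs n α β, f (colSet x.1 x.2) := by
  rw [← sum_filter_of_ne fun S hS hne => not_not.1 (mt (hf S hS) hne)]
  symm
  refine sum_nbij' (fun x => colSet x.1 x.2) (fun S => ⟨S.toRight.toLeftᶜ, S.toRight.toRight⟩)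
    ?_ ?_ ?_ ?_ fun _ _ => rfl
  · rintro ⟨A, I⟩ hx
    simp only [goodPairs, mem_sigma, mem_filter, mem_univ, true_and, mem_powersetCard_univ] at hx
    have hA : 0 < A.card := card_pos.2 ⟨α, hx.1.1⟩
    have hAm : A.card ≤ m := by simpa using card_le_univ A
    simp [colSet, card_disjSum, card_compl, hx]
    omega
  · intro S hS
    simp only [mem_filter, mem_powersetCard_univ] at hS
    have hunit : S.toLeft = univ := by ext; simp [hS.2.1]
    have hS₁ := card_toLeft_add_card_toRight (u := S)
    have hS₂ := card_toLeft_add_card_toRight (u := S.toRight)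
    simp only [goodPairs, mem_sigma, mem_filter, mem_univ, true_and, mem_powersetCard_univ,
      mem_compl, mem_toLeft, mem_toRight, card_compl, Fintype.card_fin]
    refine ⟨⟨hS.2.2.1, hS.2.2.2⟩, ?_⟩
    simp only [hunit, card_univ, Fintype.card_unit] at hS₁
    omega
  · intro x hx
    simp [colSet]
  · intro S hS
    have hunit : univ = S.toLeft := by ext; simp [(mem_filter.1 hS).2.1]
    simp only [colSet, compl_compl, hunit, toLeft_disjSum_toRight]

theorem sum_Icc_powersetCard_eq_sum_goodPairs (α β : Fin m)
    (f : Finset (Fin m) → Finset (Fin n) → R) :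
    ∑ k ∈ Icc 1 (min m (min m n + 1)), ∑ A ∈ powersetCard k univ,
      ∑ I ∈ powersetCard (k - 1) univ, (if α ∈ A ∧ β ∈ A then f A I else 0) =
      ∑ x ∈ goodPairs n α β, f x.1 x.2 := by
  set g : ℕ → R := fun k => ∑ A ∈ powersetCard k univ,
    if α ∈ A ∧ β ∈ A then ∑ I ∈ powersetCard (A.card - 1) univ, f A I else 0
  calc _ = ∑ k ∈ Icc 1 (min m (min m n + 1)), g k := by
        refine sum_congr rfl fun k _ => sum_congr rfl fun A hA => ?_
        rw [mem_powersetCard_univ.1 hA, sum_ite_irrel, sum_const_zero]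
    _ = ∑ k ∈ range (m + 1), g k := by
        refine sum_subset (fun k hk => by simp at hk ⊢; omega) fun k hk hk' => ?_
        refine sum_eq_zero fun A hA => ite_eq_right_iff.2 fun hαβ => ?_
        have hA := mem_powersetCard_univ.1 hA
        have : 0 < A.card := card_pos.2 ⟨α, hαβ.1⟩
        simp only [mem_range, mem_Icc, not_and_or, not_le] at hk hk'
        rw [powersetCard_eq_empty.2 (by simp; omega), sum_empty]
    _ = _ := by
        rw [goodPairs, sum_sigma, sum_filter, ← powerset_univ, sum_powerset, card_univ,
          Fintype.card_fin]

end Reindex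

theorem minor_one_add_mul_transpose_general (m n : ℕ)
    (F : Matrix (Fin m) (Fin n) ℝ) (α β : Fin m) :
    mminor (1 + F * Fᵀ) ({α} : Finset (Fin m))ᶜ ({β} : Finset (Fin m))ᶜ =
      ∑ k ∈ Finset.Icc 1 (min m (min m n + 1)),
        ∑ A ∈ Finset.powersetCard k (Finset.univ : Finset (Fin m)),
          ∑ I' ∈ Finset.powersetCard (k - 1) (Finset.univ : Finset (Fin n)),
            if α ∈ A ∧ β ∈ A then
              (-1 : ℝ) ^ (ordIdx A α + ordIdx A β + α.val + β.val) *
                mminor F (A.erase α) I' * mminor F (A.erase β) I'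
            else 0 := by
  obtain ⟨m, rfl⟩ := Nat.exists_eq_add_one_of_ne_zero α.pos.ne'
  calc _ = (-1) ^ (α.val + β.val) * det ((1 + F * Fᵀ).updateRow α (Pi.single β 1)) := by
        rw [mminor_compl_singleton, ← adjugate_apply, adjugate_fin_succ_eq_det_submatrix,
          ← mul_assoc, ← pow_add, Even.neg_one_pow ⟨_, rfl⟩, one_mul]
    _ = (-1) ^ (α.val + β.val) * ∑ x ∈ goodPairs n α β, (-1) ^ (ordIdx x.1 α + ordIdx x.1 β) *
          (mminor F (x.1.erase α) x.2 * mminor F (x.1.erase β) x.2) := by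
        rw [← updateRow_augment_mul_transpose_augment, det_mul_transpose_eq_sum_powersetCard,
          Fintype.card_fin, sum_powersetCard_eq_sum_goodPairs α β _
            fun S hS => det_mulTransposeOn_augment_eq_zero F α β (mem_powersetCard_univ.1 hS)]
        refine congrArg _ (sum_congr rfl fun x hx => ?_)
        simp only [goodPairs, mem_sigma, mem_filter, mem_univ, true_and, mem_powersetCard_univ] at hx
        exact det_mulTransposeOn_augment_colSet F hx.1.1 hx.1.2
          (by have := card_pos.2 ⟨α, hx.1.1⟩; omega)
    _ = _ := by
        rw [sum_Icc_powersetCard_eq_sum_goodPairs, mul_sum]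
        refine sum_congr rfl fun x _ => ?_
        ring

/-- Expansion of the `(α,β)` minor of `I_m + FFᵀ` (delete row `α`, column `β`) in terms of
the minors of `F`. -/
theorem minor_one_add_mul_transpose (m n : ℕ) (hm : 2 ≤ m)
    (F : Matrix (Fin m) (Fin n) ℝ) (α β : Fin m) :
    mminor (1 + F * Fᵀ) ({α} : Finset (Fin m))ᶜ ({β} : Finset (Fin m))ᶜ =
      ∑ k ∈ Finset.Icc 1 (min m (min m n + 1)),
        ∑ A ∈ Finset.powersetCard k (Finset.univ : Finset (Fin m)),
          ∑ I' ∈ Finset.powersetCard (k - 1) (Finset.univ : Finset (Fin n)),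
            if α ∈ A ∧ β ∈ A then
              (-1 : ℝ) ^ (ordIdx A α + ordIdx A β + α.val + β.val) *
                mminor F (A.erase α) I' * mminor F (A.erase β) I'
            else 0 :=
  minor_one_add_mul_transpose_general m n F α β
end

section
/- Fix m ≥ 1 and real numbers h ≠ 0, P ∈ ℝ, D, F ∈ ℝᵐ, and let U = (h,P,D,F) ∈ ℝ^{2+2m}. Define the (2+2m)×(2+2m) block matrix A(U) = (1/h)·[[0, h, 0, 0], [(1−P²)/h, 2P, 0, 0], [−(PD+F)/h, D, P·I_m, I_m], [−(D+PF)/h, F, I_m, P·I_m]] (rows/columns blocked as 1+1+m+m). Set λ_± = (P±1)/h. Then: (a) the vectors v_±⁰ = (h, P±1, D, F) and v_±^i = (0, 0, e_i, ±e_i) for i = 1,…,m (where e_i is the i-th standard basis vector of ℝᵐ) satisfy A(U) v_±^k = λ_± v_±^k for k = 0,1,…,m, so λ_+ and λ_− are eigenvalues of A(U), each with at least m+1 linearly independent eigenvectors; (b) the gradients of λ_± with respect to U = (h,P,D,F), namely ∇λ_± = (−(P±1)/h², 1/h, 0, 0), satisfy ∇λ_±(U)·v_±^k(U) = 0 for every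 k = 0,1,…,m, i.e. both characteristic fields are linearly degenerate. -/
/-!
On the `(h, P)` block, `A(U)` maps `(h, P ± 1)` to `(P ± 1, (1 + P² ± 2P)/h)`, and
`1 + P² ± 2P = (P ± 1)²`; the `D`, `F` rows then reproduce `λ_± (D, F)` because the
`1/h`-terms cancel. On vectors `(0, 0, x, y)` the matrix acts as `(1/h) [[P, 1], [1, P]]`,
whose eigenvectors are `(x, ±x)`. Linear degeneracy holds because
`∇λ_± · v = (v_P - λ_± v_h)/h`, and every eigenvector has `v_P = λ_± v_h`.
-/

noncomputable def stringCoeffOp {m : ℕ} (h P : ℝ) (D F : Fin m → ℝ) :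
    ℝ × ℝ × (Fin m → ℝ) × (Fin m → ℝ) → ℝ × ℝ × (Fin m → ℝ) × (Fin m → ℝ) :=
  fun u => (1 / h) • (
    h * u.2.1,
    (1 - P ^ 2) / h * u.1 + 2 * P * u.2.1,
    (fun α => -((P * D α + F α) / h) * u.1 + D α * u.2.1 + P * u.2.2.1 α + u.2.2.2 α),
    (fun α => -((D α + P * F α) / h) * u.1 + F α * u.2.1 + u.2.2.1 α + P * u.2.2.2 α))

section stringCoeffOp

variable {m : ℕ} {h P s : ℝ} (D F : Fin m → ℝ)

theorem stringCoeffOp_base (hh : h ≠ 0) (hs : s ^ 2 = 1) :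
    stringCoeffOp h P D F (h, P + s, D, F) = ((P + s) / h) • (h, P + s, D, F) := by
  refine Prod.ext ?_ (Prod.ext ?_ (Prod.ext (funext fun α => ?_) (funext fun α => ?_))) <;>
    simp only [stringCoeffOp, Prod.smul_fst, Prod.smul_snd, Pi.smul_apply, smul_eq_mul] <;>
    field_simp
  · linear_combination -hs
  all_goals ring

theorem stringCoeffOp_transverse (hs : s ^ 2 = 1) {x y : Fin m → ℝ} (hy : y = s • x) :
    stringCoeffOp h P D F (0, 0, x, y) = ((P + s) / h) • (0, 0, x, y) := by
  subst hy
  refine Prod.ext ?_ (Prod.ext ?_ (Prod.ext (funext fun α => ?_) (funext fun α => ?_))) <;>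
    simp only [stringCoeffOp, Prod.smul_fst, Prod.smul_snd, Pi.smul_apply, smul_eq_mul]
  · ring
  · ring
  · ring
  · linear_combination (-(x α / h)) * hs

end stringCoeffOp

theorem LinearIndependent.zero_zero_prod {ι R M₁ M₂ M₃ M₄ : Type*} [Semiring R]
    [AddCommMonoid M₁] [AddCommMonoid M₂] [AddCommMonoid M₃] [AddCommMonoid M₄]
    [Module R M₁] [Module R M₂] [Module R M₃] [Module R M₄]
    {v : ι → M₃} (hv : LinearIndependent R v) (w : ι → M₄) :
    LinearIndependent R (fun i => ((0 : M₁), (0 : M₂), v i, w i)) :=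
  hv.of_comp (LinearMap.fst R M₃ M₄ ∘ₗ LinearMap.snd R M₂ _ ∘ₗ LinearMap.snd R M₁ _)

theorem LinearIndependent.option_elim_of_fst_ne_zero {ι K M : Type*} [DivisionRing K]
    [AddCommGroup M] [Module K M] {f : ι → K × M} (hf : LinearIndependent K f)
    (hf₁ : ∀ i, (f i).1 = 0) {x : K × M} (hx : x.1 ≠ 0) :
    LinearIndependent K (fun k : Option ι => k.elim x f) := by
  have hspan : Submodule.span K (Set.range f) ≤ LinearMap.ker (LinearMap.fst K K M) :=
    Submodule.span_le.2 (Set.range_subset_iff.2 hf₁)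
  have helim : (fun k : Option ι => k.elim x f) = fun k => Option.casesOn' k x f := by
    funext k
    cases k <;> rfl
  rw [helim]
  exact hf.option fun hmem => hx (hspan hmem)

theorem neg_div_sq_mul_add_one_div_mul_eq_zero {h c a b : ℝ} (hh : h ≠ 0)
    (hab : b * h = c * a) : -c / h ^ 2 * a + 1 / h * b = 0 := by
  field_simp
  linear_combination hab

theorem string_system_linearly_degenerate_general (m : ℕ)
    (h P : ℝ) (hh : h ≠ 0) (D F : Fin m → ℝ)
    (Aop : ℝ × ℝ × (Fin m → ℝ) × (Fin m → ℝ) → ℝ × ℝ × (Fin m → ℝ) × (Fin m → ℝ))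
    (hAop : Aop = fun u => (1 / h) • (
        h * u.2.1,
        (1 - P ^ 2) / h * u.1 + 2 * P * u.2.1,
        (fun α => -((P * D α + F α) / h) * u.1 + D α * u.2.1 + P * u.2.2.1 α + u.2.2.2 α),
        (fun α => -((D α + P * F α) / h) * u.1 + F α * u.2.1 + u.2.2.1 α + P * u.2.2.2 α)))
    (vp vm : Option (Fin m) → ℝ × ℝ × (Fin m → ℝ) × (Fin m → ℝ))
    (hvp : vp = fun k => k.elim (h, P + 1, D, F)
      (fun i => (0, 0, Pi.single i 1, Pi.single i 1)))
    (hvm : vm = fun k => k.elim (h, P - 1, D, F)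
      (fun i => (0, 0, Pi.single i 1, -Pi.single i 1))) :
    (∀ k, Aop (vp k) = ((P + 1) / h) • vp k) ∧
    (∀ k, Aop (vm k) = ((P - 1) / h) • vm k) ∧
    LinearIndependent ℝ vp ∧
    LinearIndependent ℝ vm ∧
    (∀ k, (-(P + 1) / h ^ 2) * (vp k).1 + (1 / h) * (vp k).2.1 = 0) ∧
    (∀ k, (-(P - 1) / h ^ 2) * (vm k).1 + (1 / h) * (vm k).2.1 = 0) := by
  subst hvp hvm
  obtain rfl : Aop = stringCoeffOp h P D F := hAop
  have hsingle := Pi.linearIndependent_single_one (Fin m) ℝ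
  refine ⟨?_, ?_, ?_, ?_, ?_, ?_⟩
  · rintro (_ | i)
    · exact stringCoeffOp_base D F hh (one_pow 2)
    · exact stringCoeffOp_transverse D F (one_pow 2) (one_smul ℝ _).symm
  · rw [sub_eq_add_neg]
    rintro (_ | i)
    · exact stringCoeffOp_base D F hh (by norm_num)
    · exact stringCoeffOp_transverse D F (by norm_num) (neg_one_smul ℝ _).symm
  · exact (hsingle.zero_zero_prod (M₁ := ℝ) (M₂ := ℝ) fun i => Pi.single i (1 : ℝ))
      |>.option_elim_of_fst_ne_zero (fun _ => rfl) hh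
  · exact (hsingle.zero_zero_prod (M₁ := ℝ) (M₂ := ℝ) fun i => -(Pi.single i 1 : Fin m → ℝ))
      |>.option_elim_of_fst_ne_zero (fun _ => rfl) hh
  · rintro (_ | i) <;> exact neg_div_sq_mul_add_one_div_mul_eq_zero hh (by simp)
  · rintro (_ | i) <;> exact neg_div_sq_mul_add_one_div_mul_eq_zero hh (by simp)

/-- The `n = 1` augmented system for a relativistic string: the coefficient matrix `A(U)`
has the two propagation speeds `λ_± = (P±1)/h`, each with `m+1` linearly independent
eigenvectors, and both characteristic fields are linearly degenerate. -/
theorem string_system_linearly_degenerate (m : ℕ) (hm : 1 ≤ m)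
    (h P : ℝ) (hh : h ≠ 0) (D F : Fin m → ℝ)
    (Aop : ℝ × ℝ × (Fin m → ℝ) × (Fin m → ℝ) → ℝ × ℝ × (Fin m → ℝ) × (Fin m → ℝ))
    (hAop : Aop = fun u => (1 / h) • (
        h * u.2.1,
        (1 - P ^ 2) / h * u.1 + 2 * P * u.2.1,
        (fun α => -((P * D α + F α) / h) * u.1 + D α * u.2.1 + P * u.2.2.1 α + u.2.2.2 α),
        (fun α => -((D α + P * F α) / h) * u.1 + F α * u.2.1 + u.2.2.1 α + P * u.2.2.2 α)))
    (vp vm : Option (Fin m) → ℝ × ℝ × (Fin m → ℝ) × (Fin m → ℝ))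
    (hvp : vp = fun k => k.elim (h, P + 1, D, F)
      (fun i => (0, 0, Pi.single i 1, Pi.single i 1)))
    (hvm : vm = fun k => k.elim (h, P - 1, D, F)
      (fun i => (0, 0, Pi.single i 1, -Pi.single i 1))) :
    (∀ k, Aop (vp k) = ((P + 1) / h) • vp k) ∧
    (∀ k, Aop (vm k) = ((P - 1) / h) • vm k) ∧
    LinearIndependent ℝ vp ∧
    LinearIndependent ℝ vm ∧
    (∀ k, (-(P + 1) / h ^ 2) * (vp k).1 + (1 / h) * (vp k).2.1 = 0) ∧
    (∀ k, (-(P - 1) / h ^ 2) * (vm k).1 + (1 / h) * (vm k).2.1 = 0) :=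
  string_system_linearly_degenerate_general m h P hh D F Aop hAop vp vm hvp hvm
end

section
/- Let M_{A,I} be C² real-valued functions on an open subset of ℝⁿ, indexed by A ⊆ {1,…,m}, I ⊆ {1,…,n} with 1 ≤ |A| = |I| ≤ min{m,n}, satisfying the differential constraints Σ_{i∈I}(−1)^{O_I(i)} ∂_i M_{A', I∖{i}} = 0 for all A', I with 2 ≤ |I| = |A'|+1 ≤ min{m,n}+1 (with the convention M_{∅,∅} = 1). Then for every admissible pair (A,I) and every i ∈ {1,…,n}, ∂_i M_{A,I} = Σ_{j∈I, i∉I∖{j}} (−1)^{O_I(j)+O_{I∖{j}}(i)} ∂_j M_{A,(I∖{j})∪{i}}. -/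
namespace ordIdx

variable {N : ℕ}

theorem insert_self (A : Finset (Fin N)) (a : Fin N) : ordIdx (insert a A) a = ordIdx A a := by
  simp only [ordIdx, Finset.insert_idem]

theorem erase_self (A : Finset (Fin N)) (a : Fin N) : ordIdx (A.erase a) a = ordIdx A a := by
  by_cases ha : a ∈ A
  · rw [ordIdx, ordIdx, Finset.insert_erase ha, Finset.insert_eq_of_mem ha]
  · rw [Finset.erase_eq_of_notMem ha]

theorem insert_of_ne {A : Finset (Fin N)} {a b : Fin N} (hb : b ∉ A) (hba : b ≠ a) :
    ordIdx (insert b A) a = ordIdx A a + if b ≤ a then 1 else 0 := by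
  unfold ordIdx
  rw [Finset.insert_comm, Finset.filter_insert]
  split_ifs
  · exact Finset.card_insert_of_notMem (by simp [hb, hba])
  · rfl

theorem neg_one_pow_add_erase_insert {I : Finset (Fin N)} {i j : Fin N}
    (hi : i ∉ I) (hj : j ∈ I) {R : Type*} [CommRing R] :
    (-1 : R) ^ (ordIdx I j + ordIdx (I.erase j) i) =
      -((-1 : R) ^ ordIdx (insert i I) i * (-1 : R) ^ ordIdx (insert i I) j) := by
  have hij : i ≠ j := by rintro rfl; exact hi hj
  have hI : ordIdx I i = ordIdx (I.erase j) i + if j ≤ i then 1 else 0 := by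
    simpa only [Finset.insert_erase hj] using insert_of_ne (Finset.notMem_erase j I) hij.symm
  rw [insert_self, insert_of_ne hi hij, hI]
  rcases hij.lt_or_gt with h | h <;> simp [h.le, h.not_ge, pow_add, mul_comm]

end ordIdx

section Exchange

variable {N : ℕ} {R : Type*} [CommRing R] (F : Finset (Fin N) → Fin N → R)

theorem exchange_sum_of_mem {I : Finset (Fin N)} {i : Fin N} (hi : i ∈ I) :
    F I i = ∑ j, if j ∈ I ∧ i ∉ I.erase j then
      (-1 : R) ^ (ordIdx I j + ordIdx (I.erase j) i) * F (insert i (I.erase j)) j else 0 := by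
  rw [Finset.sum_eq_single_of_mem i (Finset.mem_univ i) fun j _ hji => if_neg fun h =>
      h.2 (Finset.mem_erase.mpr ⟨hji.symm, hi⟩),
    if_pos ⟨hi, Finset.notMem_erase i I⟩, Finset.insert_erase hi, ordIdx.erase_self,
    ← two_mul, pow_mul]
  simp

theorem exchange_sum_of_notMem {I : Finset (Fin N)} {i : Fin N} (hi : i ∉ I)
    (hF : ∑ j ∈ insert i I, (-1 : R) ^ ordIdx (insert i I) j * F ((insert i I).erase j) j = 0) :
    F I i = ∑ j, if j ∈ I ∧ i ∉ I.erase j then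
      (-1 : R) ^ (ordIdx I j + ordIdx (I.erase j) i) * F (insert i (I.erase j)) j else 0 := by
  set J := insert i I
  have hterm : ∀ j ∈ I, (-1 : R) ^ (ordIdx I j + ordIdx (I.erase j) i) *
      F (insert i (I.erase j)) j =
        -(-1 : R) ^ ordIdx J i * ((-1 : R) ^ ordIdx J j * F (J.erase j) j) := by
    intro j hj
    have hij : i ≠ j := by rintro rfl; exact hi hj
    rw [ordIdx.neg_one_pow_add_erase_insert hi hj, Finset.erase_insert_of_ne hij]
    ring
  have hsq : (-1 : R) ^ ordIdx J i * (-1 : R) ^ ordIdx J i = 1 := by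
    rw [← pow_add, ← two_mul, pow_mul]; simp
  rw [Finset.sum_insert hi, Finset.erase_insert hi] at hF
  calc F I i = -(-1 : R) ^ ordIdx J i *
        ∑ j ∈ I, (-1 : R) ^ ordIdx J j * F (J.erase j) j := by
          linear_combination (-1 : R) ^ ordIdx J i * hF - F I i * hsq
    _ = ∑ j ∈ I, (-1 : R) ^ (ordIdx I j + ordIdx (I.erase j) i) *
        F (insert i (I.erase j)) j := by
          rw [Finset.mul_sum]; exact (Finset.sum_congr rfl hterm).symm
    _ = _ := by
          rw [← Finset.sum_filter]
          congr 1
          ext j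
          simpa using fun hj h => hi (Finset.mem_of_mem_erase h)

end Exchange

theorem partial_minor_identity_general (m n : ℕ)
    (Ω : Set (Fin n → ℝ))
    (M : Finset (Fin m) → Finset (Fin n) → (Fin n → ℝ) → ℝ)
    (hcons : ∀ x ∈ Ω, ∀ (A' : Finset (Fin m)) (I : Finset (Fin n)),
      I.card = A'.card + 1 → 2 ≤ I.card →
      ∑ i ∈ I, (-1 : ℝ) ^ (ordIdx I i) * pd i (M A' (I.erase i)) x = 0) :
    ∀ x ∈ Ω, ∀ (A : Finset (Fin m)) (I : Finset (Fin n)),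
      A.card = I.card → 1 ≤ A.card → ∀ i : Fin n,
      pd i (M A I) x =
        ∑ j, if j ∈ I ∧ i ∉ I.erase j then
          (-1 : ℝ) ^ (ordIdx I j + ordIdx (I.erase j) i) *
            pd j (M A (insert i (I.erase j))) x
        else 0 := by
  intro x hx A I hAI hA i
  by_cases hi : i ∈ I
  · exact exchange_sum_of_mem (fun K j => pd j (M A K) x) hi
  · have hcard : (insert i I).card = A.card + 1 := by rw [Finset.card_insert_of_notMem hi, hAI]
    exact exchange_sum_of_notMem (fun K j => pd j (M A K) x) hi
      (hcons x hx A (insert i I) hcard (by omega))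

/-- If the functions `M_{A,I}` satisfy the differential constraints
`Σ_{i∈I}(−1)^{O_I(i)} ∂_i M_{A',I∖{i}} = 0`, then
`∂_i M_{A,I} = Σ_{j∈I, i∉I∖{j}} (−1)^{O_I(j)+O_{I∖{j}}(i)} ∂_j M_{A,(I∖{j})∪{i}}`. -/
theorem partial_minor_identity (m n : ℕ)
    (Ω : Set (Fin n → ℝ)) (hΩ : IsOpen Ω)
    (M : Finset (Fin m) → Finset (Fin n) → (Fin n → ℝ) → ℝ)
    (hMempty : M ∅ ∅ = fun _ => 1)
    (hsm : ∀ A I, ContDiffOn ℝ 2 (M A I) Ω)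
    (hcons : ∀ x ∈ Ω, ∀ (A' : Finset (Fin m)) (I : Finset (Fin n)),
      I.card = A'.card + 1 → 2 ≤ I.card →
      ∑ i ∈ I, (-1 : ℝ) ^ (ordIdx I i) * pd i (M A' (I.erase i)) x = 0) :
    ∀ x ∈ Ω, ∀ (A : Finset (Fin m)) (I : Finset (Fin n)),
      A.card = I.card → 1 ≤ A.card → ∀ i : Fin n,
      pd i (M A I) x =
        ∑ j, if j ∈ I ∧ i ∉ I.erase j then
          (-1 : ℝ) ^ (ordIdx I j + ordIdx (I.erase j) i) *
            pd j (M A (insert i (I.erase j))) x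
        else 0 :=
  partial_minor_identity_general m n Ω M hcons
end

section
/- Let h > 0, D = (D_α)_{α=1,…,m}, P = (P_i)_{i=1,…,n}, and M_{A,I} (for A ⊆ {1,…,m}, I ⊆ {1,…,n}, 1 ≤ |A| = |I| ≤ min{m,n}) be smooth functions on an open subset of ℝ×ℝⁿ solving the augmented system (sn1)–(sn5): (sn1) ∂_t h + ∂_iP_i = 0; (sn2) ∂_t D_α + ∂_i(D_αP_i/h) + Σ_{A,I,i: α∈A, i∈I}(−1)^{O_A(α)+O_I(i)} ∂_i(M_{A,I}M_{A∖{α},I∖{i}}/h) = 0; (sn3) ∂_t P_i + Σ_{A,I,j: j∈I, i∉I∖{j}}(−1)^{O_I(j)+O_{I∖{j}}(i)} ∂_j(M_{A,(I∖{j})∪{i}}M_{A,I}/h) + ∂_j(P_iP_j/h) − ∂_i((1+Σ_{A,I}M_{A,I}²)/h) = 0; (sn4) ∂_t M_{A,I} + Σ_{i,j: i∈I, j∉I∖{i}}(−1)^{O_{I∖{i}}(j)+O_I(i)} ∂_i(M_{A,(I∖{i})∪{j}}P_j/h) + Σ_{α,i: α∈A, i∈I}(−1)^{O_A(α)+O_I(i)}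 ∂_i(M_{A∖{α},I∖{i}}D_α/h) = 0; (sn5) Σ_{i∈I}(−1)^{O_I(i)} ∂_i M_{A',I∖{i}} = 0 for 2 ≤ |I| = |A'|+1 ≤ min{m,n}+1. Then the rescaled variables τ = 1/h, d_α = D_α/h, v_i = P_i/h, m_{A,I} = M_{A,I}/h (with convention m_{∅,∅} = τ) solve the symmetric non-conservative system: ∂_t τ + v_j∂_jτ − τ∂_jv_j = 0; ∂_t d_α + v_i∂_i d_α + Σ_{A,I,i: α∈A, i∈I}(−1)^{O_A(α)+O_I(i)} m_{A∖{α},I∖{i}} ∂_i m_{A,I} = 0; ∂_t v_i + Σ_{A,I,j: j∈I, i∉I∖{j}}(−1)^{O_I(j)+O_{I∖{j}}(i)} m_{A,(I∖{j})∪{i}} ∂_j m_{A,I} − Σ_{A,I} m_{A,I}∂_i m_{A,I} + v_j∂_jv_i − τ∂_iτ = 0; ∂_t m_{A,I} + v_j∂_j m_{A,I} + Σ_{i,j: i∈I, j∉I∖{i}}(−1)^{O_{I∖{i}}(j)+O_I(i)} m_{A,(I∖{i})∪{j}} ∂_i v_j − m_{A,I}∂_jv_j + Σ_{α,i: α∈A,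 i∈I}(−1)^{O_A(α)+O_I(i)} m_{A∖{α},I∖{i}} ∂_i d_α = 0. -/
/-- Time derivative `∂_t f` of a function of `(t,x) ∈ ℝ × ℝⁿ`. -/
noncomputable def pt {n : ℕ} (f : ℝ × (Fin n → ℝ) → ℝ) (p : ℝ × (Fin n → ℝ)) : ℝ :=
  fderiv ℝ f p (1, 0)

/-- Spatial partial derivative `∂_i f` of a function of `(t,x) ∈ ℝ × ℝⁿ`. -/
noncomputable def px {n : ℕ} (i : Fin n) (f : ℝ × (Fin n → ℝ) → ℝ) (p : ℝ × (Fin n → ℝ)) : ℝ :=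
  fderiv ℝ f p (0, Pi.single i 1)

/-!
Write `f̂ = f / h`. Two identities drive the proof: for a density `F` transported with
velocity `v = P / h`,
`∂ₜF̂ + vⱼ ∂ⱼF̂ = (∂ₜF + ∂ⱼ(F Pⱼ / h)) / h - F (∂ₜh + ∂ⱼPⱼ) / h²`,
and for any `f, g`, `ĝ ∂ f̂ = ∂(f g / h) / h - f ∂g / h²`.
Dividing each conservation law by `h` and subtracting a multiple of (sn1) thus gives the
non-conservative equation up to terms `± f ∂ᵢM_{A',I'} / h²`. Grouped by `A'`, these are the
left-hand sides of the involutions (sn5), which also hold for `|I| = 1` because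
`M_{∅,∅} = 1`; they vanish, except for diagonal terms that reassemble into `vⱼ ∂ⱼ m_{A,I}`
and into the `m ∂ᵢ m` part of the pressure gradient.
-/

theorem ite_eq_div_sub_div (c : Prop) [Decidable c] {x y z a b : ℝ} (h : x = y / a - z / b) :
    (if c then x else 0) = (if c then y else 0) / a - (if c then z else 0) / b := by
  split_ifs <;> simp [h]

section QuotientRule

variable {E : Type*} [NormedAddCommGroup E] [NormedSpace ℝ E] {f g h : E → ℝ} {p : E}

theorem fderiv_div_apply (hf : DifferentiableAt ℝ f p) (hh : DifferentiableAt ℝ h p)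
    (h0 : h p ≠ 0) (w : E) :
    fderiv ℝ (fun q => f q / h q) p w = fderiv ℝ f p w / h p - f p * fderiv ℝ h p w / h p ^ 2 := by
  have hinv : fderiv ℝ (fun q => (h q)⁻¹) p = -(h p ^ 2)⁻¹ • fderiv ℝ h p :=
    ((hasDerivAt_inv h0).comp_hasFDerivAt p hh.hasFDerivAt).fderiv
  simp only [div_eq_mul_inv]
  rw [fderiv_fun_mul hf (hh.fun_inv h0), hinv]
  simp only [add_apply, smul_apply, smul_eq_mul]
  field_simp
  ring

theorem fderiv_one_div_apply (hh : DifferentiableAt ℝ h p) (h0 : h p ≠ 0) (w : E) :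
    fderiv ℝ (fun q => 1 / h q) p w = -fderiv ℝ h p w / h p ^ 2 := by
  rw [fderiv_div_apply (differentiableAt_const _) hh h0]
  simp only [fderiv_fun_const, Pi.zero_apply, zero_apply, zero_div, one_mul, zero_sub, neg_div]

theorem div_mul_fderiv_div_apply (hf : DifferentiableAt ℝ f p) (hg : DifferentiableAt ℝ g p)
    (hh : DifferentiableAt ℝ h p) (h0 : h p ≠ 0) (w : E) :
    g p / h p * fderiv ℝ (fun q => f q / h q) p w
      = fderiv ℝ (fun q => f q * g q / h q) p w / h p - f p * fderiv ℝ g p w / h p ^ 2 := by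
  rw [fderiv_div_apply hf hh h0, fderiv_div_apply (hf.fun_mul hg) hh h0, fderiv_fun_mul hf hg]
  simp only [add_apply, smul_apply, smul_eq_mul]
  field_simp
  ring

theorem div_mul_fderiv_div_apply' (hf : DifferentiableAt ℝ f p) (hg : DifferentiableAt ℝ g p)
    (hh : DifferentiableAt ℝ h p) (h0 : h p ≠ 0) (w : E) :
    g p / h p * fderiv ℝ (fun q => f q / h q) p w
      = fderiv ℝ (fun q => g q * f q / h q) p w / h p - f p * fderiv ℝ g p w / h p ^ 2 := by
  simp only [mul_comm (g _)]
  exact div_mul_fderiv_div_apply hf hg hh h0 w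

theorem div_mul_fderiv_div_sub_div_mul_fderiv_div_apply (hf : DifferentiableAt ℝ f p)
    (hg : DifferentiableAt ℝ g p) (hh : DifferentiableAt ℝ h p) (h0 : h p ≠ 0) (w : E) :
    g p / h p * fderiv ℝ (fun q => f q / h q) p w - f p / h p * fderiv ℝ (fun q => g q / h q) p w
      = (g p * fderiv ℝ f p w - f p * fderiv ℝ g p w) / h p ^ 2 := by
  rw [fderiv_div_apply hf hh h0, fderiv_div_apply hg hh h0]
  field_simp
  ring

theorem hasFDerivAt_one_add_sum_sum_ite_sq {ι κ : Type*} [Fintype ι] [Fintype κ]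
    (c : ι → κ → Prop) [∀ a b, Decidable (c a b)] {F : ι → κ → E → ℝ}
    (hF : ∀ a b, DifferentiableAt ℝ (F a b) p) :
    HasFDerivAt (fun q => 1 + ∑ a, ∑ b, if c a b then F a b q ^ 2 else 0)
      (∑ a, ∑ b, if c a b then (2 * F a b p) • fderiv ℝ (F a b) p else 0) p := by
  refine (HasFDerivAt.fun_sum fun a _ => HasFDerivAt.fun_sum fun b _ => ?_).const_add 1
  by_cases hab : c a b
  · simpa [hab] using (hF a b).hasFDerivAt.pow 2
  · simpa only [hab, if_false] using hasFDerivAt_const (0 : ℝ) p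

end QuotientRule

section OrdIdx

variable {N : ℕ}

theorem ordIdx_insert_self (A : Finset (Fin N)) (a : Fin N) :
    ordIdx (insert a A) a = ordIdx A a := by
  rw [ordIdx, ordIdx, Finset.insert_idem]

theorem ordIdx_erase_self (A : Finset (Fin N)) (a : Fin N) :
    ordIdx (A.erase a) a = ordIdx A a := by
  by_cases ha : a ∈ A
  · rw [← ordIdx_insert_self, Finset.insert_erase ha]
  · rw [Finset.erase_eq_of_notMem ha]

theorem ordIdx_insert_of_ne {A : Finset (Fin N)} {a b : Fin N} (ha : a ∉ A) (hab : a ≠ b) :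
    ordIdx (insert a A) b = ordIdx A b + if a ≤ b then 1 else 0 := by
  have ha' : a ∉ insert b A := by simp [ha, hab]
  rw [ordIdx, ordIdx, Finset.insert_comm, Finset.filter_insert]
  split_ifs
  · rw [Finset.card_insert_of_notMem fun h => ha' (Finset.mem_of_mem_filter a h)]
  · rfl

theorem ordIdx_insert_add_ordIdx_insert {I : Finset (Fin N)} {i j : Fin N} (hi : i ∉ I)
    (hj : j ∈ I) :
    ordIdx (insert i I) j + ordIdx (insert i I) i = ordIdx I j + ordIdx (I.erase j) i + 1 := by
  have hij : i ≠ j := fun h => hi (h ▸ hj)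
  have hIi : ordIdx I i = ordIdx (I.erase j) i + if j ≤ i then 1 else 0 := by
    rw [← ordIdx_insert_of_ne (Finset.notMem_erase j I) hij.symm, Finset.insert_erase hj]
  rw [ordIdx_insert_of_ne hi hij, ordIdx_insert_self, hIi]
  have := lt_or_gt_of_ne hij
  split_ifs <;> omega

end OrdIdx

/-- `c A I i` stands for `∂ᵢ M_{A,I}`: this is (sn5), extended to `|I| = 1` by `M_{∅,∅} = 1`. -/
def SatisfiesInvolution {m n : ℕ} (c : Finset (Fin m) → Finset (Fin n) → Fin n → ℝ) : Prop :=
  ∀ A I, I.card = A.card + 1 → ∑ i ∈ I, (-1 : ℝ) ^ ordIdx I i * c A (I.erase i) i = 0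

namespace SatisfiesInvolution

variable {m n : ℕ} {c : Finset (Fin m) → Finset (Fin n) → Fin n → ℝ}
  {A : Finset (Fin m)} {I : Finset (Fin n)}

theorem of_two_le (hc0 : ∀ i, c ∅ ∅ i = 0)
    (hc : ∀ A I, I.card = A.card + 1 → 2 ≤ I.card →
      ∑ i ∈ I, (-1 : ℝ) ^ ordIdx I i * c A (I.erase i) i = 0) :
    SatisfiesInvolution c := by
  intro A I hI
  by_cases h2 : 2 ≤ I.card
  · exact hc A I hI h2
  obtain rfl : A = ∅ := Finset.card_eq_zero.mp (by omega)
  obtain ⟨i, rfl⟩ := Finset.card_eq_one.mp (by simpa using hI)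
  simp [hc0]

theorem apply_empty (hc : SatisfiesInvolution c) (i : Fin n) : c ∅ ∅ i = 0 := by
  simpa using hc ∅ {i} rfl

theorem sum_sign_insert_erase (hc : SatisfiesInvolution c) (hAI : A.card = I.card) {i : Fin n}
    (hi : i ∉ I) :
    ∑ j ∈ I, (-1 : ℝ) ^ (ordIdx I j + ordIdx (I.erase j) i) * c A (insert i (I.erase j)) j
      = c A I i := by
  have h := hc A (insert i I) (by rw [Finset.card_insert_of_notMem hi, hAI])
  rw [Finset.sum_insert hi, Finset.erase_insert hi] at h
  set s := (-1 : ℝ) ^ ordIdx (insert i I) i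
  have hs : s * s = 1 := by rw [← pow_add]; exact Even.neg_one_pow ⟨_, rfl⟩
  have hterm : ∀ j ∈ I,
      (-1 : ℝ) ^ (ordIdx I j + ordIdx (I.erase j) i) * c A (insert i (I.erase j)) j
        = -s * ((-1) ^ ordIdx (insert i I) j * c A ((insert i I).erase j) j) := by
    intro j hj
    have hsign := congrArg ((-1 : ℝ) ^ ·) (ordIdx_insert_add_ordIdx_insert hi hj)
    rw [Finset.erase_insert_of_ne fun h : i = j => hi (h ▸ hj)]
    simp only [pow_add, pow_one] at hsign
    linear_combination c A (insert i (I.erase j)) j * hsign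
  rw [Finset.sum_congr rfl hterm, ← Finset.mul_sum]
  linear_combination (-s) * h + c A I i * hs

theorem sum_ite_sign_insert_erase (hc : SatisfiesInvolution c) (hAI : A.card = I.card)
    (i : Fin n) (x : ℝ) :
    ∑ j, (if j ∈ I ∧ i ∉ I.erase j then
        (-1 : ℝ) ^ (ordIdx I j + ordIdx (I.erase j) i) * x * c A (insert i (I.erase j)) j
      else 0) = x * c A I i := by
  by_cases hi : i ∈ I
  · rw [Fintype.sum_eq_single i fun j hji => if_neg fun hj =>
      hj.2 (Finset.mem_erase.mpr ⟨Ne.symm hji, hi⟩)]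
    rw [if_pos ⟨hi, Finset.notMem_erase i I⟩, Finset.insert_erase hi, ordIdx_erase_self,
      Even.neg_one_pow ⟨_, rfl⟩, one_mul]
  · have hguard : ∀ j, (j ∈ I ∧ i ∉ I.erase j) ↔ j ∈ I :=
      fun j => and_iff_left fun h => hi (Finset.mem_of_mem_erase h)
    simp_rw [hguard]
    rw [Fintype.sum_ite_mem, ← hc.sum_sign_insert_erase hAI hi, Finset.mul_sum]
    exact Finset.sum_congr rfl fun j _ => by ring

theorem sum_ite_sign_erase_erase (hc : SatisfiesInvolution c) (hAI : A.card = I.card)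
    (α : Fin m) (x : ℝ) :
    ∑ i, (if α ∈ A ∧ i ∈ I then
        (-1 : ℝ) ^ (ordIdx A α + ordIdx I i) * x * c (A.erase α) (I.erase i) i
      else 0) = 0 := by
  by_cases hα : α ∈ A
  · have h := hc (A.erase α) I (by rw [Finset.card_erase_add_one hα, hAI])
    simp only [hα, true_and, Fintype.sum_ite_mem]
    calc _ = (-1) ^ ordIdx A α * x * ∑ i ∈ I, (-1) ^ ordIdx I i * c (A.erase α) (I.erase i) i := by
          rw [Finset.mul_sum]
          exact Finset.sum_congr rfl fun i _ => by ring
      _ = 0 := by rw [h, mul_zero]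
  · simp [hα]

end SatisfiesInvolution

section RescaledSystem

variable {m n : ℕ} {F h : ℝ × (Fin n → ℝ) → ℝ} {D : Fin m → ℝ × (Fin n → ℝ) → ℝ}
  {P : Fin n → ℝ × (Fin n → ℝ) → ℝ} {M : Finset (Fin m) → Finset (Fin n) → ℝ × (Fin n → ℝ) → ℝ}
  {p : ℝ × (Fin n → ℝ)}

theorem pt_div_add_sum_div_mul_px_div (hF : DifferentiableAt ℝ F p)
    (hh : DifferentiableAt ℝ h p) (h0 : h p ≠ 0) (hP : ∀ j, DifferentiableAt ℝ (P j) p) :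
    pt (fun q => F q / h q) p + ∑ j, P j p / h p * px j (fun q => F q / h q) p
      = (pt F p + ∑ j, px j (fun q => F q * P j q / h q) p) / h p
        - F p * (pt h p + ∑ j, px j (P j) p) / h p ^ 2 := by
  have ht : pt (fun q => F q / h q) p = pt F p / h p - F p * pt h p / h p ^ 2 :=
    fderiv_div_apply hF hh h0 _
  have hx : ∀ j, P j p / h p * px j (fun q => F q / h q) p
      = px j (fun q => F q * P j q / h q) p / h p - F p * px j (P j) p / h p ^ 2 :=
    fun j => div_mul_fderiv_div_apply hF (hP j) hh h0 _
  simp only [ht, hx, Finset.sum_sub_distrib, ← Finset.sum_div, ← Finset.mul_sum]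
  ring

theorem sum_div_mul_px_div_sub_div_mul_sum_px_div (hF : DifferentiableAt ℝ F p)
    (hh : DifferentiableAt ℝ h p) (h0 : h p ≠ 0) (hP : ∀ j, DifferentiableAt ℝ (P j) p) :
    ∑ j, P j p / h p * px j (fun q => F q / h q) p
        - F p / h p * ∑ j, px j (fun q => P j q / h q) p
      = (∑ j, P j p * px j F p - F p * ∑ j, px j (P j) p) / h p ^ 2 := by
  rw [Finset.mul_sum, Finset.mul_sum, ← Finset.sum_sub_distrib, ← Finset.sum_sub_distrib,
    Finset.sum_div]
  exact Finset.sum_congr rfl fun j _ =>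
    div_mul_fderiv_div_sub_div_mul_fderiv_div_apply hF (hP j) hh h0 _

theorem rescaled_tau_eq (hh : DifferentiableAt ℝ h p) (h0 : h p ≠ 0)
    (hP : ∀ j, DifferentiableAt ℝ (P j) p) (sn1 : pt h p + ∑ j, px j (P j) p = 0) :
    pt (fun q => 1 / h q) p + ∑ j, P j p / h p * px j (fun q => 1 / h q) p
      - 1 / h p * ∑ j, px j (fun q => P j q / h q) p = 0 := by
  have hconst : ∀ j, px j (fun _ => (1 : ℝ)) p = 0 := fun j => by simp [px]
  have ht : pt (fun q => 1 / h q) p = -pt h p / h p ^ 2 := fderiv_one_div_apply hh h0 _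
  have hW := sum_div_mul_px_div_sub_div_mul_sum_px_div (differentiableAt_const 1) hh h0 hP
  simp only [hconst, mul_zero, Finset.sum_const_zero, one_mul, zero_sub] at hW
  linear_combination ht + hW - sn1 / h p ^ 2

theorem rescaled_d_eq (hh : DifferentiableAt ℝ h p) (h0 : h p ≠ 0) {α : Fin m}
    (hD : DifferentiableAt ℝ (D α) p) (hP : ∀ j, DifferentiableAt ℝ (P j) p)
    (hM : ∀ A I, DifferentiableAt ℝ (M A I) p)
    (hc : SatisfiesInvolution fun A I i => px i (M A I) p)
    (sn1 : pt h p + ∑ j, px j (P j) p = 0)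
    (sn2 : pt (D α) p + ∑ i, px i (fun q => D α q * P i q / h q) p +
      (∑ A : Finset (Fin m), ∑ I : Finset (Fin n), ∑ i,
        if A.card = I.card ∧ α ∈ A ∧ i ∈ I then
          (-1 : ℝ) ^ (ordIdx A α + ordIdx I i) *
            px i (fun q => M A I q * M (A.erase α) (I.erase i) q / h q) p
        else 0) = 0) :
    pt (fun q => D α q / h q) p + ∑ i, P i p / h p * px i (fun q => D α q / h q) p +
      (∑ A : Finset (Fin m), ∑ I : Finset (Fin n), ∑ i,
        if A.card = I.card ∧ α ∈ A ∧ i ∈ I then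
          (-1 : ℝ) ^ (ordIdx A α + ordIdx I i) * (M (A.erase α) (I.erase i) p / h p) *
            px i (fun q => M A I q / h q) p
        else 0) = 0 := by
  have hmat := pt_div_add_sum_div_mul_px_div hD hh h0 hP
  have hflux : (∑ A : Finset (Fin m), ∑ I : Finset (Fin n), ∑ i,
        if A.card = I.card ∧ α ∈ A ∧ i ∈ I then
          (-1 : ℝ) ^ (ordIdx A α + ordIdx I i) * (M (A.erase α) (I.erase i) p / h p) *
            px i (fun q => M A I q / h q) p
        else 0)
      = (∑ A : Finset (Fin m), ∑ I : Finset (Fin n), ∑ i,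
          if A.card = I.card ∧ α ∈ A ∧ i ∈ I then
            (-1 : ℝ) ^ (ordIdx A α + ordIdx I i) *
              px i (fun q => M A I q * M (A.erase α) (I.erase i) q / h q) p
          else 0) / h p
        - (∑ A : Finset (Fin m), ∑ I : Finset (Fin n), ∑ i,
          if A.card = I.card ∧ α ∈ A ∧ i ∈ I then
            (-1 : ℝ) ^ (ordIdx A α + ordIdx I i) * M A I p * px i (M (A.erase α) (I.erase i)) p
          else 0) / h p ^ 2 := by
    simp only [Finset.sum_div, ← Finset.sum_sub_distrib]
    refine Finset.sum_congr rfl fun A _ => Finset.sum_congr rfl fun I _ =>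
      Finset.sum_congr rfl fun i _ => ite_eq_div_sub_div _ ?_
    have := div_mul_fderiv_div_apply (hM A I) (hM (A.erase α) (I.erase i)) hh h0 (0, Pi.single i 1)
    unfold px
    linear_combination (-1 : ℝ) ^ (ordIdx A α + ordIdx I i) * this
  have hinv : (∑ A : Finset (Fin m), ∑ I : Finset (Fin n), ∑ i,
      if A.card = I.card ∧ α ∈ A ∧ i ∈ I then
        (-1 : ℝ) ^ (ordIdx A α + ordIdx I i) * M A I p * px i (M (A.erase α) (I.erase i)) p
      else 0) = 0 := by
    refine Finset.sum_eq_zero fun A _ => Finset.sum_eq_zero fun I _ => ?_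
    by_cases hAI : A.card = I.card
    · simpa only [hAI, true_and] using hc.sum_ite_sign_erase_erase hAI α (M A I p)
    · simp [hAI]
  linear_combination hmat + hflux + sn2 / h p - D α p / h p ^ 2 * sn1 - hinv / h p ^ 2

theorem rescaled_v_eq (hh : DifferentiableAt ℝ h p) (h0 : h p ≠ 0)
    (hP : ∀ j, DifferentiableAt ℝ (P j) p) (hM : ∀ A I, DifferentiableAt ℝ (M A I) p)
    (hc : SatisfiesInvolution fun A I i => px i (M A I) p)
    (sn1 : pt h p + ∑ j, px j (P j) p = 0) (i : Fin n)
    (sn3 : pt (P i) p +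
      (∑ A : Finset (Fin m), ∑ I : Finset (Fin n), ∑ j,
        if A.card = I.card ∧ j ∈ I ∧ i ∉ I.erase j then
          (-1 : ℝ) ^ (ordIdx I j + ordIdx (I.erase j) i) *
            px j (fun q => M A (insert i (I.erase j)) q * M A I q / h q) p
        else 0) +
      (∑ j, px j (fun q => P i q * P j q / h q) p) -
      px i (fun q => (1 + ∑ A : Finset (Fin m), ∑ I : Finset (Fin n),
        if A.card = I.card ∧ 1 ≤ A.card then (M A I q) ^ 2 else 0) / h q) p = 0) :
    pt (fun q => P i q / h q) p +
      (∑ A : Finset (Fin m), ∑ I : Finset (Fin n), ∑ j,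
        if A.card = I.card ∧ j ∈ I ∧ i ∉ I.erase j then
          (-1 : ℝ) ^ (ordIdx I j + ordIdx (I.erase j) i) *
            (M A (insert i (I.erase j)) p / h p) * px j (fun q => M A I q / h q) p
        else 0) -
      (∑ A : Finset (Fin m), ∑ I : Finset (Fin n),
        if A.card = I.card ∧ 1 ≤ A.card then
          M A I p / h p * px i (fun q => M A I q / h q) p
        else 0) +
      ∑ j, P j p / h p * px j (fun q => P i q / h q) p - 1 / h p * px i (fun q => 1 / h q) p
      = 0 := by
  have hmat := pt_div_add_sum_div_mul_px_div (hP i) hh h0 hP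
  have hflux : (∑ A : Finset (Fin m), ∑ I : Finset (Fin n), ∑ j,
        if A.card = I.card ∧ j ∈ I ∧ i ∉ I.erase j then
          (-1 : ℝ) ^ (ordIdx I j + ordIdx (I.erase j) i) *
            (M A (insert i (I.erase j)) p / h p) * px j (fun q => M A I q / h q) p
        else 0)
      = (∑ A : Finset (Fin m), ∑ I : Finset (Fin n), ∑ j,
          if A.card = I.card ∧ j ∈ I ∧ i ∉ I.erase j then
            (-1 : ℝ) ^ (ordIdx I j + ordIdx (I.erase j) i) *
              px j (fun q => M A (insert i (I.erase j)) q * M A I q / h q) p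
          else 0) / h p
        - (∑ A : Finset (Fin m), ∑ I : Finset (Fin n), ∑ j,
          if A.card = I.card ∧ j ∈ I ∧ i ∉ I.erase j then
            (-1 : ℝ) ^ (ordIdx I j + ordIdx (I.erase j) i) * M A I p *
              px j (M A (insert i (I.erase j))) p
          else 0) / h p ^ 2 := by
    simp only [Finset.sum_div, ← Finset.sum_sub_distrib]
    refine Finset.sum_congr rfl fun A _ => Finset.sum_congr rfl fun I _ =>
      Finset.sum_congr rfl fun j _ => ite_eq_div_sub_div _ ?_
    have := div_mul_fderiv_div_apply' (hM A I) (hM A (insert i (I.erase j))) hh h0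
      (0, Pi.single j 1)
    unfold px
    linear_combination (-1 : ℝ) ^ (ordIdx I j + ordIdx (I.erase j) i) * this
  have hinv : (∑ A : Finset (Fin m), ∑ I : Finset (Fin n), ∑ j,
        if A.card = I.card ∧ j ∈ I ∧ i ∉ I.erase j then
          (-1 : ℝ) ^ (ordIdx I j + ordIdx (I.erase j) i) * M A I p *
            px j (M A (insert i (I.erase j))) p
        else 0)
      = ∑ A : Finset (Fin m), ∑ I : Finset (Fin n),
          if A.card = I.card ∧ 1 ≤ A.card then M A I p * px i (M A I) p else 0 := by
    refine Finset.sum_congr rfl fun A _ => Finset.sum_congr rfl fun I _ => ?_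
    by_cases hAI : A.card = I.card
    · simp only [hAI, true_and]
      rw [hc.sum_ite_sign_insert_erase hAI i (M A I p)]
      rcases Nat.eq_zero_or_pos I.card with hI | hI
      · obtain rfl : I = ∅ := Finset.card_eq_zero.mp hI
        obtain rfl : A = ∅ := Finset.card_eq_zero.mp (hAI.trans hI)
        simp [hc.apply_empty i]
      · exact (if_pos hI).symm
    · simp [hAI]
  have hkin : (∑ A : Finset (Fin m), ∑ I : Finset (Fin n),
        if A.card = I.card ∧ 1 ≤ A.card then M A I p / h p * px i (fun q => M A I q / h q) p
        else 0)
      = (∑ A : Finset (Fin m), ∑ I : Finset (Fin n),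
          if A.card = I.card ∧ 1 ≤ A.card then M A I p * px i (M A I) p else 0) / h p ^ 2
        - (∑ A : Finset (Fin m), ∑ I : Finset (Fin n),
          if A.card = I.card ∧ 1 ≤ A.card then M A I p ^ 2 else 0) * px i h p / h p ^ 3 := by
    simp only [Finset.sum_div, Finset.sum_mul, ← Finset.sum_sub_distrib]
    refine Finset.sum_congr rfl fun A _ => Finset.sum_congr rfl fun I _ => ?_
    split_ifs
    · unfold px
      rw [fderiv_div_apply (hM A I) hh h0]
      field_simp
    · simp
  have hS := hasFDerivAt_one_add_sum_sum_ite_sq (fun A I => A.card = I.card ∧ 1 ≤ A.card) hM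
  have hpress : px i (fun q => (1 + ∑ A : Finset (Fin m), ∑ I : Finset (Fin n),
        if A.card = I.card ∧ 1 ≤ A.card then (M A I q) ^ 2 else 0) / h q) p
      = 2 * (∑ A : Finset (Fin m), ∑ I : Finset (Fin n),
          if A.card = I.card ∧ 1 ≤ A.card then M A I p * px i (M A I) p else 0) / h p
        - (1 + ∑ A : Finset (Fin m), ∑ I : Finset (Fin n),
          if A.card = I.card ∧ 1 ≤ A.card then M A I p ^ 2 else 0) * px i h p / h p ^ 2 := by
    unfold px
    rw [fderiv_div_apply hS.differentiableAt hh h0, hS.fderiv]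
    simp only [sum_apply, apply_ite (fun L : (ℝ × (Fin n → ℝ)) →L[ℝ] ℝ => L (0, Pi.single i 1)),
      smul_apply, smul_eq_mul, mul_assoc, zero_apply, Finset.mul_sum, mul_ite, mul_zero]
  have htau : px i (fun q => 1 / h q) p = -px i h p / h p ^ 2 := fderiv_one_div_apply hh h0 _
  linear_combination hmat + hflux - hkin - htau / h p - hinv / h p ^ 2 + sn3 / h p + hpress / h p
    - P i p / h p ^ 2 * sn1

theorem rescaled_m_eq (hh : DifferentiableAt ℝ h p) (h0 : h p ≠ 0)
    (hD : ∀ α, DifferentiableAt ℝ (D α) p) (hP : ∀ j, DifferentiableAt ℝ (P j) p)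
    (hM : ∀ A I, DifferentiableAt ℝ (M A I) p)
    (hc : SatisfiesInvolution fun A I i => px i (M A I) p)
    (sn1 : pt h p + ∑ j, px j (P j) p = 0) {A : Finset (Fin m)} {I : Finset (Fin n)}
    (hAI : A.card = I.card)
    (sn4 : pt (M A I) p +
      (∑ i, ∑ j, if i ∈ I ∧ j ∉ I.erase i then
          (-1 : ℝ) ^ (ordIdx (I.erase i) j + ordIdx I i) *
            px i (fun q => M A (insert j (I.erase i)) q * P j q / h q) p
        else 0) +
      (∑ α, ∑ i, if α ∈ A ∧ i ∈ I then
          (-1 : ℝ) ^ (ordIdx A α + ordIdx I i) *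
            px i (fun q => M (A.erase α) (I.erase i) q * D α q / h q) p
        else 0) = 0) :
    pt (fun q => M A I q / h q) p + ∑ j, P j p / h p * px j (fun q => M A I q / h q) p +
      (∑ i, ∑ j, if i ∈ I ∧ j ∉ I.erase i then
          (-1 : ℝ) ^ (ordIdx (I.erase i) j + ordIdx I i) *
            (M A (insert j (I.erase i)) p / h p) * px i (fun q => P j q / h q) p
        else 0) -
      M A I p / h p * ∑ j, px j (fun q => P j q / h q) p +
      (∑ α, ∑ i, if α ∈ A ∧ i ∈ I then
          (-1 : ℝ) ^ (ordIdx A α + ordIdx I i) *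
            (M (A.erase α) (I.erase i) p / h p) * px i (fun q => D α q / h q) p
        else 0) = 0 := by
  have ht : pt (fun q => M A I q / h q) p = pt (M A I) p / h p - M A I p * pt h p / h p ^ 2 :=
    fderiv_div_apply (hM A I) hh h0 _
  have hW := sum_div_mul_px_div_sub_div_mul_sum_px_div (hM A I) hh h0 hP
  have hflux : (∑ i, ∑ j, if i ∈ I ∧ j ∉ I.erase i then
        (-1 : ℝ) ^ (ordIdx (I.erase i) j + ordIdx I i) *
          (M A (insert j (I.erase i)) p / h p) * px i (fun q => P j q / h q) p
      else 0)
      = (∑ i, ∑ j, if i ∈ I ∧ j ∉ I.erase i then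
          (-1 : ℝ) ^ (ordIdx (I.erase i) j + ordIdx I i) *
            px i (fun q => M A (insert j (I.erase i)) q * P j q / h q) p
        else 0) / h p
        - (∑ i, ∑ j, if i ∈ I ∧ j ∉ I.erase i then
          (-1 : ℝ) ^ (ordIdx (I.erase i) j + ordIdx I i) * P j p *
            px i (M A (insert j (I.erase i))) p
        else 0) / h p ^ 2 := by
    simp only [Finset.sum_div, ← Finset.sum_sub_distrib]
    refine Finset.sum_congr rfl fun i _ => Finset.sum_congr rfl fun j _ =>
      ite_eq_div_sub_div _ ?_
    have := div_mul_fderiv_div_apply' (hP j) (hM A (insert j (I.erase i))) hh h0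
      (0, Pi.single i 1)
    unfold px
    linear_combination (-1 : ℝ) ^ (ordIdx (I.erase i) j + ordIdx I i) * this
  have hsrc : (∑ α, ∑ i, if α ∈ A ∧ i ∈ I then
        (-1 : ℝ) ^ (ordIdx A α + ordIdx I i) *
          (M (A.erase α) (I.erase i) p / h p) * px i (fun q => D α q / h q) p
      else 0)
      = (∑ α, ∑ i, if α ∈ A ∧ i ∈ I then
          (-1 : ℝ) ^ (ordIdx A α + ordIdx I i) *
            px i (fun q => M (A.erase α) (I.erase i) q * D α q / h q) p
        else 0) / h p
        - (∑ α, ∑ i, if α ∈ A ∧ i ∈ I then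
          (-1 : ℝ) ^ (ordIdx A α + ordIdx I i) * D α p * px i (M (A.erase α) (I.erase i)) p
        else 0) / h p ^ 2 := by
    simp only [Finset.sum_div, ← Finset.sum_sub_distrib]
    refine Finset.sum_congr rfl fun α _ => Finset.sum_congr rfl fun i _ =>
      ite_eq_div_sub_div _ ?_
    have := div_mul_fderiv_div_apply' (hD α) (hM (A.erase α) (I.erase i)) hh h0
      (0, Pi.single i 1)
    unfold px
    linear_combination (-1 : ℝ) ^ (ordIdx A α + ordIdx I i) * this
  have hinv_flux : (∑ i, ∑ j, if i ∈ I ∧ j ∉ I.erase i then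
        (-1 : ℝ) ^ (ordIdx (I.erase i) j + ordIdx I i) * P j p *
          px i (M A (insert j (I.erase i))) p
      else 0) = ∑ j, P j p * px j (M A I) p := by
    rw [Finset.sum_comm]
    refine Finset.sum_congr rfl fun j _ => ?_
    simp only [add_comm (ordIdx (I.erase _) j)]
    exact hc.sum_ite_sign_insert_erase hAI j (P j p)
  have hinv_src : (∑ α, ∑ i, if α ∈ A ∧ i ∈ I then
        (-1 : ℝ) ^ (ordIdx A α + ordIdx I i) * D α p * px i (M (A.erase α) (I.erase i)) p
      else 0) = 0 :=
    Finset.sum_eq_zero fun α _ => hc.sum_ite_sign_erase_erase hAI α (D α p)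
  linear_combination ht + hW + hflux + hsrc - hinv_flux / h p ^ 2 - hinv_src / h p ^ 2
    + sn4 / h p - M A I p / h p ^ 2 * sn1

end RescaledSystem

/-- A smooth solution of the augmented system (sn1)-(sn5) yields, in the rescaled
variables `τ = 1/h`, `d = D/h`, `v = P/h`, `m_{A,I} = M_{A,I}/h` (with `m_{∅,∅} = τ`),
a solution of the symmetric non-conservative system. -/
theorem nonconservative_form (m n : ℕ)
    (Ω : Set (ℝ × (Fin n → ℝ))) (hΩ : IsOpen Ω)
    (h : ℝ × (Fin n → ℝ) → ℝ)
    (D : Fin m → ℝ × (Fin n → ℝ) → ℝ)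
    (P : Fin n → ℝ × (Fin n → ℝ) → ℝ)
    (M : Finset (Fin m) → Finset (Fin n) → ℝ × (Fin n → ℝ) → ℝ)
    (hsmh : ContDiffOn ℝ (⊤ : ℕ∞) h Ω)
    (hsmD : ∀ α, ContDiffOn ℝ (⊤ : ℕ∞) (D α) Ω)
    (hsmP : ∀ i, ContDiffOn ℝ (⊤ : ℕ∞) (P i) Ω)
    (hsmM : ∀ A I, ContDiffOn ℝ (⊤ : ℕ∞) (M A I) Ω)
    (hpos : ∀ p ∈ Ω, 0 < h p)
    (hMempty : ∀ p, M ∅ ∅ p = 1)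
    (sn1 : ∀ p ∈ Ω, pt h p + ∑ i, px i (P i) p = 0)
    (sn2 : ∀ p ∈ Ω, ∀ α,
      pt (D α) p + ∑ i, px i (fun q => D α q * P i q / h q) p +
      (∑ A : Finset (Fin m), ∑ I : Finset (Fin n), ∑ i,
        if A.card = I.card ∧ α ∈ A ∧ i ∈ I then
          (-1 : ℝ) ^ (ordIdx A α + ordIdx I i) *
            px i (fun q => M A I q * M (A.erase α) (I.erase i) q / h q) p
        else 0) = 0)
    (sn3 : ∀ p ∈ Ω, ∀ i,
      pt (P i) p +
      (∑ A : Finset (Fin m), ∑ I : Finset (Fin n), ∑ j,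
        if A.card = I.card ∧ j ∈ I ∧ i ∉ I.erase j then
          (-1 : ℝ) ^ (ordIdx I j + ordIdx (I.erase j) i) *
            px j (fun q => M A (insert i (I.erase j)) q * M A I q / h q) p
        else 0) +
      (∑ j, px j (fun q => P i q * P j q / h q) p) -
      px i (fun q => (1 + ∑ A : Finset (Fin m), ∑ I : Finset (Fin n),
        if A.card = I.card ∧ 1 ≤ A.card then (M A I q) ^ 2 else 0) / h q) p = 0)
    (sn4 : ∀ p ∈ Ω, ∀ (A : Finset (Fin m)) (I : Finset (Fin n)),
      A.card = I.card → 1 ≤ A.card →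
      pt (M A I) p +
      (∑ i, ∑ j, if i ∈ I ∧ j ∉ I.erase i then
          (-1 : ℝ) ^ (ordIdx (I.erase i) j + ordIdx I i) *
            px i (fun q => M A (insert j (I.erase i)) q * P j q / h q) p
        else 0) +
      (∑ α, ∑ i, if α ∈ A ∧ i ∈ I then
          (-1 : ℝ) ^ (ordIdx A α + ordIdx I i) *
            px i (fun q => M (A.erase α) (I.erase i) q * D α q / h q) p
        else 0) = 0)
    (sn5 : ∀ p ∈ Ω, ∀ (A' : Finset (Fin m)) (I : Finset (Fin n)),
      I.card = A'.card + 1 → 2 ≤ I.card →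
      ∑ i ∈ I, (-1 : ℝ) ^ (ordIdx I i) * px i (M A' (I.erase i)) p = 0)
    (τ : ℝ × (Fin n → ℝ) → ℝ) (hτ : τ = fun q => 1 / h q)
    (d : Fin m → ℝ × (Fin n → ℝ) → ℝ) (hd : ∀ α, d α = fun q => D α q / h q)
    (v : Fin n → ℝ × (Fin n → ℝ) → ℝ) (hv : ∀ i, v i = fun q => P i q / h q)
    (mf : Finset (Fin m) → Finset (Fin n) → ℝ × (Fin n → ℝ) → ℝ)
    (hmf : ∀ A I, mf A I = fun q => M A I q / h q) :
    ∀ p ∈ Ω,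
      (pt τ p + ∑ j, v j p * px j τ p - τ p * ∑ j, px j (v j) p = 0) ∧
      (∀ α, pt (d α) p + ∑ i, v i p * px i (d α) p +
        (∑ A : Finset (Fin m), ∑ I : Finset (Fin n), ∑ i,
          if A.card = I.card ∧ α ∈ A ∧ i ∈ I then
            (-1 : ℝ) ^ (ordIdx A α + ordIdx I i) *
              mf (A.erase α) (I.erase i) p * px i (mf A I) p
          else 0) = 0) ∧
      (∀ i, pt (v i) p +
        (∑ A : Finset (Fin m), ∑ I : Finset (Fin n), ∑ j,
          if A.card = I.card ∧ j ∈ I ∧ i ∉ I.erase j then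
            (-1 : ℝ) ^ (ordIdx I j + ordIdx (I.erase j) i) *
              mf A (insert i (I.erase j)) p * px j (mf A I) p
          else 0) -
        (∑ A : Finset (Fin m), ∑ I : Finset (Fin n),
          if A.card = I.card ∧ 1 ≤ A.card then mf A I p * px i (mf A I) p else 0) +
        ∑ j, v j p * px j (v i) p - τ p * px i τ p = 0) ∧
      (∀ (A : Finset (Fin m)) (I : Finset (Fin n)), A.card = I.card → 1 ≤ A.card →
        pt (mf A I) p + ∑ j, v j p * px j (mf A I) p +
        (∑ i, ∑ j, if i ∈ I ∧ j ∉ I.erase i then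
            (-1 : ℝ) ^ (ordIdx (I.erase i) j + ordIdx I i) *
              mf A (insert j (I.erase i)) p * px i (v j) p
          else 0) -
        mf A I p * ∑ j, px j (v j) p +
        (∑ α, ∑ i, if α ∈ A ∧ i ∈ I then
            (-1 : ℝ) ^ (ordIdx A α + ordIdx I i) *
              mf (A.erase α) (I.erase i) p * px i (d α) p
          else 0) = 0) := by
  intro p hp
  subst hτ
  obtain rfl : d = fun α q => D α q / h q := funext hd
  obtain rfl : v = fun i q => P i q / h q := funext hv
  obtain rfl : mf = fun A I q => M A I q / h q := funext fun A => funext (hmf A)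
  have hdiff : ∀ {f : ℝ × (Fin n → ℝ) → ℝ}, ContDiffOn ℝ (⊤ : ℕ∞) f Ω → DifferentiableAt ℝ f p :=
    fun hf => (hf.differentiableOn (by simp)).differentiableAt (hΩ.mem_nhds hp)
  have hh := hdiff hsmh
  have h0 : h p ≠ 0 := (hpos p hp).ne'
  have hD := fun α => hdiff (hsmD α)
  have hP := fun i => hdiff (hsmP i)
  have hM := fun A I => hdiff (hsmM A I)
  have hc : SatisfiesInvolution fun A I i => px i (M A I) p :=
    .of_two_le (fun i => by simp [px, show M ∅ ∅ = fun _ => 1 from funext hMempty]) (sn5 p hp)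
  exact ⟨rescaled_tau_eq hh h0 hP (sn1 p hp),
    fun α => rescaled_d_eq hh h0 (hD α) hP hM hc (sn1 p hp) (sn2 p hp α),
    fun i => rescaled_v_eq hh h0 hP hM hc (sn1 p hp) i (sn3 p hp i),
    fun A I hAI hA => rescaled_m_eq hh h0 hD hP hM hc (sn1 p hp) hAI (sn4 p hp A I hAI hA)⟩
end

section
/- Let (τ, d, v, m_{A,I}) be smooth functions on an open subset of ℝ×ℝⁿ (with d = (d_α)_{α=1,…,m}, v = (v_i)_{i=1,…,n}, m_{A,I} indexed by A ⊆ {1,…,m}, I ⊆ {1,…,n}, 1 ≤ |A| = |I| ≤ min{m,n}, convention m_{∅,∅} = τ) solving the symmetric non-conservative system: ∂_t τ + v_j∂_jτ − τ∂_jv_j = 0; ∂_t d_α + v_i∂_i d_α + Σ_{A,I,i: α∈A, i∈I}(−1)^{O_A(α)+O_I(i)} m_{A∖{α},I∖{i}} ∂_i m_{A,I} = 0; ∂_t v_i + Σ_{A,I,j: j∈I, i∉I∖{j}}(−1)^{O_I(j)+O_{I∖{j}}(i)} m_{A,(I∖{j})∪{i}} ∂_j m_{A,I} − Σ_{A,I}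 m_{A,I}∂_i m_{A,I} + v_j∂_jv_i − τ∂_iτ = 0; ∂_t m_{A,I} + v_j∂_j m_{A,I} + Σ_{i,j: i∈I, j∉I∖{i}}(−1)^{O_{I∖{i}}(j)+O_I(i)} m_{A,(I∖{i})∪{j}} ∂_i v_j − m_{A,I}∂_jv_j + Σ_{α,i: α∈A, i∈I}(−1)^{O_A(α)+O_I(i)} m_{A∖{α},I∖{i}} ∂_i d_α = 0. Write m_{αi} = m_{{α},{i}} and define λ = ½(τ² + Σ_i v_i² + Σ_α d_α² + Σ_{A,I} m_{A,I}² − 1), ω_i = τ v_i − Σ_α m_{αi} d_α, and ψ^i_{A,I} = Σ_{α∈A}(−1)^{O_A(α)+O_I(i)} m_{A∖{α},I} m_{αi} − 1_{{i∉I}} τ m_{A,I∪{i}}. Then ω satisfies the evolution equation ∂_t ω_i = ω_i ∂_jv_j − ω_j ∂_iv_j − v_j∂_jω_i + τ∂_iλ + Σ_{A,I,j: j∈I} (−1)^{O_I(j)+O_{I∖{j}}(i)} (∂_j m_{A,I}) ψ^i_{A,I∖{j}} (repeated indices summed). -/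
open Finset

section Calculus

variable {E : Type*} [NormedAddCommGroup E] [NormedSpace ℝ E] {p : E}

theorem HasFDerivAt.ite_zero {F : Type*} [NormedAddCommGroup F] [NormedSpace ℝ F]
    (P : Prop) [Decidable P] {f : E → F} {f' : E →L[ℝ] F} (hf : HasFDerivAt f f' p) :
    HasFDerivAt (fun q => if P then f q else 0) (if P then f' else 0) p := by
  split_ifs
  exacts [hf, hasFDerivAt_const 0 p]

theorem fderiv_mul_sub_sum_mul_apply {ι : Type*} [Fintype ι] {f g : E → ℝ} {F G : ι → E → ℝ}
    (hf : DifferentiableAt ℝ f p) (hg : DifferentiableAt ℝ g p)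
    (hF : ∀ a, DifferentiableAt ℝ (F a) p) (hG : ∀ a, DifferentiableAt ℝ (G a) p) (w : E) :
    fderiv ℝ (fun q => f q * g q - ∑ a, F a q * G a q) p w =
      f p * fderiv ℝ g p w + g p * fderiv ℝ f p w
        - ∑ a, (F a p * fderiv ℝ (G a) p w + G a p * fderiv ℝ (F a) p w) := by
  simp (disch := fun_prop) [fderiv_fun_sub, fderiv_fun_mul, fderiv_fun_sum]

theorem fderiv_half_sum_sq_sub_one_apply {m n : ℕ} {τ : E → ℝ} {d : Fin m → E → ℝ}
    {v : Fin n → E → ℝ} {mf : Finset (Fin m) → Finset (Fin n) → E → ℝ}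
    (hτ : DifferentiableAt ℝ τ p)
    (hd : ∀ α, DifferentiableAt ℝ (d α) p) (hv : ∀ j, DifferentiableAt ℝ (v j) p)
    (hmf : ∀ A I, DifferentiableAt ℝ (mf A I) p) (w : E) :
    fderiv ℝ (fun q => (1 / 2) * ((τ q) ^ 2 + ∑ i, (v i q) ^ 2 + ∑ α, (d α q) ^ 2 +
      (∑ A : Finset (Fin m), ∑ I : Finset (Fin n),
        if A.card = I.card ∧ 1 ≤ A.card then (mf A I q) ^ 2 else 0) - 1)) p w =
      τ p * fderiv ℝ τ p w + ∑ j, v j p * fderiv ℝ (v j) p w + ∑ α, d α p * fderiv ℝ (d α) p w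
      + ∑ A : Finset (Fin m), ∑ I : Finset (Fin n),
        if A.card = I.card ∧ 1 ≤ A.card then mf A I p * fderiv ℝ (mf A I) p w else 0 := by
  have hsq : ∀ {f : E → ℝ}, DifferentiableAt ℝ f p →
      HasFDerivAt (fun q => f q ^ 2) ((2 • f p ^ (2 - 1)) • fderiv ℝ f p) p :=
    fun hf => HasFDerivAt.pow hf.hasFDerivAt 2
  have h := HasFDerivAt.const_mul (HasFDerivAt.sub_const (c := 1) (HasFDerivAt.fun_add
    (HasFDerivAt.fun_add (HasFDerivAt.fun_add (hsq hτ)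
      (HasFDerivAt.fun_sum (u := univ) fun j _ => hsq (hv j)))
      (HasFDerivAt.fun_sum (u := univ) fun α _ => hsq (hd α)))
    (HasFDerivAt.fun_sum (u := univ) fun A _ => HasFDerivAt.fun_sum (u := univ) fun I _ =>
      (hsq (hmf A I)).ite_zero (A.card = I.card ∧ 1 ≤ A.card)))) (1 / 2 : ℝ)
  rw [h.fderiv]
  simp [mul_sum, apply_ite (fun L : E →L[ℝ] ℝ => L w), mul_ite, ← mul_assoc]

end Calculus

theorem sum_sub_sum_mul_mul {ι κ : Type*} [Fintype ι] [Fintype κ] (a : ℝ) (x g : κ → ℝ)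
    (y : ι → κ → ℝ) (z : ι → ℝ) :
    ∑ j, (a * x j - ∑ α, y α j * z α) * g j = a * ∑ j, x j * g j - ∑ α, z α * ∑ j, y α j * g j := by
  simp only [sub_mul, sum_sub_distrib, sum_mul, mul_sum]
  rw [sum_comm]
  congr 1
  · exact sum_congr rfl fun _ _ => by ring
  · exact sum_congr rfl fun _ _ => sum_congr rfl fun _ _ => by ring

section Material

noncomputable def materialDeriv {n : ℕ} (v : Fin n → ℝ × (Fin n → ℝ) → ℝ)
    (f : ℝ × (Fin n → ℝ) → ℝ) (p : ℝ × (Fin n → ℝ)) : ℝ :=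
  fderiv ℝ f p (1, fun j => v j p)

variable {m n : ℕ} {τ : ℝ × (Fin n → ℝ) → ℝ} {d : Fin m → ℝ × (Fin n → ℝ) → ℝ}
  {v : Fin n → ℝ × (Fin n → ℝ) → ℝ} {p : ℝ × (Fin n → ℝ)}

theorem materialDeriv_eq_pt_add_sum (f : ℝ × (Fin n → ℝ) → ℝ) :
    materialDeriv v f p = pt f p + ∑ j, v j p * px j f p := by
  have hw : ((1 : ℝ), fun j => v j p) = (1, 0) + ∑ j, v j p • ((0 : ℝ), Pi.single j (1 : ℝ)) := by
    ext k
    · simp [Prod.fst_sum]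
    · simp [Prod.snd_sum, Finset.sum_apply, Pi.single_apply]
  rw [materialDeriv, hw, map_add, map_sum]
  simp only [map_smul, smul_eq_mul, pt, px]

theorem materialDeriv_omega {m₁ : Fin m → Fin n → ℝ × (Fin n → ℝ) → ℝ} (i : Fin n)
    {div K C : ℝ} {c : Fin m → ℝ}
    (hτ : DifferentiableAt ℝ τ p) (hvi : DifferentiableAt ℝ (v i) p)
    (hd : ∀ α, DifferentiableAt ℝ (d α) p) (hm₁ : ∀ α, DifferentiableAt ℝ (m₁ α i) p)
    (Lτ : materialDeriv v τ p = τ p * div)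
    (Lv : materialDeriv v (v i) p = K + τ p * px i τ p - C)
    (Ld : ∀ α, materialDeriv v (d α) p = -c α)
    (Lm : ∀ α, materialDeriv v (m₁ α i) p =
      m₁ α i p * div - ∑ j, m₁ α j p * px i (v j) p - τ p * px i (d α) p) :
    materialDeriv v (fun q => τ q * v i q - ∑ α, m₁ α i q * d α q) p =
      (τ p * v i p - ∑ α, m₁ α i p * d α p) * div
        + τ p * (τ p * px i τ p + K + ∑ α, d α p * px i (d α) p)
        + ∑ α, d α p * ∑ j, m₁ α j p * px i (v j) p + ∑ α, m₁ α i p * c α - τ p * C := by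
  have hα : ∀ α, m₁ α i p * -c α
      + d α p * (m₁ α i p * div - ∑ j, m₁ α j p * px i (v j) p - τ p * px i (d α) p)
      = -(m₁ α i p * c α) + m₁ α i p * d α p * div - d α p * ∑ j, m₁ α j p * px i (v j) p
        - τ p * (d α p * px i (d α) p) := fun α => by ring
  simp only [materialDeriv] at *
  rw [fderiv_mul_sub_sum_mul_apply hτ hvi hm₁ hd]
  simp only [Lτ, Lv, Ld, Lm, hα, sum_add_distrib, sum_sub_distrib, sum_neg_distrib, ← sum_mul,
    ← mul_sum]
  ring

end Material

theorem neg_one_pow_add_mul_neg_one_pow_add {R : Type*} [Monoid R] [HasDistribNeg R] (a b c : ℕ) :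
    (-1 : R) ^ (a + c) * (-1 : R) ^ (b + c) = (-1 : R) ^ (a + b) := by
  rw [← pow_add, show a + c + (b + c) = a + b + 2 * c by ring, pow_add, pow_mul, neg_one_sq,
    one_pow, mul_one]

theorem ordIdx_empty {N : ℕ} (a : Fin N) : ordIdx ∅ a = 1 := by
  simp [ordIdx, filter_singleton]

theorem ordIdx_singleton_self {N : ℕ} (a : Fin N) : ordIdx {a} a = 1 := by
  simp [ordIdx, filter_singleton]

theorem sum_transport_singleton {n : ℕ} (M : Finset (Fin n) → ℝ) (G : Fin n → Fin n → ℝ)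
    (i : Fin n) :
    (∑ i', ∑ j, if i' ∈ ({i} : Finset (Fin n)) ∧ j ∉ ({i} : Finset (Fin n)).erase i' then
        (-1 : ℝ) ^ (ordIdx (({i} : Finset (Fin n)).erase i') j + ordIdx {i} i') *
          M (insert j (({i} : Finset (Fin n)).erase i')) * G i' j
      else 0) = ∑ j, M {j} * G i j := by
  rw [Fintype.sum_eq_single i fun i' hi' => by simp [hi']]
  simp [ordIdx_empty, ordIdx_singleton_self]

theorem sum_source_singleton {m n : ℕ} (M : Finset (Fin m) → Finset (Fin n) → ℝ)
    (H : Fin m → Fin n → ℝ) (α : Fin m) (i : Fin n) :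
    (∑ α', ∑ i', if α' ∈ ({α} : Finset (Fin m)) ∧ i' ∈ ({i} : Finset (Fin n)) then
        (-1 : ℝ) ^ (ordIdx {α} α' + ordIdx {i} i') *
          M (({α} : Finset (Fin m)).erase α') (({i} : Finset (Fin n)).erase i') * H α' i'
      else 0) = M ∅ ∅ * H α i := by
  rw [Fintype.sum_eq_single α fun α' hα' => by simp [hα']]
  simp [ordIdx_singleton_self]

section Coupling

variable {m n : ℕ} (M : Finset (Fin m) → Finset (Fin n) → ℝ)
  (DM : Fin n → Finset (Fin m) → Finset (Fin n) → ℝ) (t : ℝ) (i : Fin n)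

/- The coupling terms of the `d_α`- and of the `v_i`-equation at a point, where `M A I` and
`DM j A I` stand for the values of `m_{A,I}` and `∂_j m_{A,I}` there. They are reducible so that
`linear_combination` recognises them inside the equations of the system. -/
abbrev dCoupling (α : Fin m) : ℝ :=
  ∑ A : Finset (Fin m), ∑ I : Finset (Fin n), ∑ j,
    if A.card = I.card ∧ α ∈ A ∧ j ∈ I then
      (-1 : ℝ) ^ (ordIdx A α + ordIdx I j) * M (A.erase α) (I.erase j) * DM j A I
    else 0

abbrev vCoupling : ℝ :=
  ∑ A : Finset (Fin m), ∑ I : Finset (Fin n), ∑ j,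
    if A.card = I.card ∧ j ∈ I ∧ i ∉ I.erase j then
      (-1 : ℝ) ^ (ordIdx I j + ordIdx (I.erase j) i) * M A (insert i (I.erase j)) * DM j A I
    else 0

theorem sign_mul_psi_eq (A : Finset (Fin m)) (I : Finset (Fin n)) (j : Fin n) :
    (if A.card = I.card ∧ j ∈ I then
        (-1 : ℝ) ^ (ordIdx I j + ordIdx (I.erase j) i) * DM j A I *
          ((∑ α ∈ A, (-1 : ℝ) ^ (ordIdx A α + ordIdx (I.erase j) i) *
              M (A.erase α) (I.erase j) * M {α} {i})
            - (if i ∈ I.erase j then 0 else t * M A (insert i (I.erase j))))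
      else 0)
      = (∑ α, M {α} {i} * if A.card = I.card ∧ α ∈ A ∧ j ∈ I then
            (-1 : ℝ) ^ (ordIdx A α + ordIdx I j) * M (A.erase α) (I.erase j) * DM j A I
          else 0)
        - t * (if A.card = I.card ∧ j ∈ I ∧ i ∉ I.erase j then
            (-1 : ℝ) ^ (ordIdx I j + ordIdx (I.erase j) i) *
              M A (insert i (I.erase j)) * DM j A I
          else 0) := by
  by_cases hc : A.card = I.card ∧ j ∈ I
  · simp only [hc.1, hc.2, true_and, and_true, if_true, mul_ite, mul_zero, sum_ite_mem,
      univ_inter]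
    rw [mul_sub, mul_sum]
    congr 1
    · refine sum_congr rfl fun α _ => ?_
      linear_combination (DM j A I * M (A.erase α) (I.erase j) * M {α} {i}) *
        neg_one_pow_add_mul_neg_one_pow_add (R := ℝ) (ordIdx I j) (ordIdx A α)
          (ordIdx (I.erase j) i)
    · split_ifs <;> ring
  · rw [if_neg hc, sum_eq_zero fun α _ => by rw [if_neg (by tauto), mul_zero],
      if_neg (by tauto)]
    ring

theorem sum_sign_mul_psi_eq :
    (∑ A : Finset (Fin m), ∑ I : Finset (Fin n), ∑ j,
      if A.card = I.card ∧ j ∈ I then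
        (-1 : ℝ) ^ (ordIdx I j + ordIdx (I.erase j) i) * DM j A I *
          ((∑ α ∈ A, (-1 : ℝ) ^ (ordIdx A α + ordIdx (I.erase j) i) *
              M (A.erase α) (I.erase j) * M {α} {i})
            - (if i ∈ I.erase j then 0 else t * M A (insert i (I.erase j))))
      else 0)
      = ∑ α, M {α} {i} * dCoupling M DM α - t * vCoupling M DM i := by
  simp only [dCoupling, vCoupling, sign_mul_psi_eq, sum_sub_distrib, mul_sum]
  congr 1
  exact (sum_congr rfl fun A _ => (sum_congr rfl fun I _ => sum_comm).trans
    sum_comm).trans sum_comm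

end Coupling

/-- Evolution of `ω_i = τ v_i − Σ_α m_{αi} d_α` along a solution of the symmetric
non-conservative system:
`∂_t ω_i = ω_i ∂_jv_j − ω_j ∂_iv_j − v_j∂_jω_i + τ∂_iλ
+ Σ_{A,I,j: j∈I}(−1)^{O_I(j)+O_{I∖{j}}(i)} (∂_j m_{A,I}) ψ^i_{A,I∖{j}}`. -/
theorem omega_evolution (m n : ℕ)
    (Ω : Set (ℝ × (Fin n → ℝ))) (hΩ : IsOpen Ω)
    (τ : ℝ × (Fin n → ℝ) → ℝ)
    (d : Fin m → ℝ × (Fin n → ℝ) → ℝ)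
    (v : Fin n → ℝ × (Fin n → ℝ) → ℝ)
    (mf : Finset (Fin m) → Finset (Fin n) → ℝ × (Fin n → ℝ) → ℝ)
    (hmempty : mf ∅ ∅ = τ)
    (hτ : ContDiffOn ℝ (⊤ : ℕ∞) τ Ω)
    (hd : ∀ α, ContDiffOn ℝ (⊤ : ℕ∞) (d α) Ω)
    (hv : ∀ i, ContDiffOn ℝ (⊤ : ℕ∞) (v i) Ω)
    (hmf : ∀ A I, ContDiffOn ℝ (⊤ : ℕ∞) (mf A I) Ω)
    (eq1 : ∀ p ∈ Ω,
      pt τ p + ∑ j, v j p * px j τ p - τ p * ∑ j, px j (v j) p = 0)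
    (eq2 : ∀ p ∈ Ω, ∀ α,
      pt (d α) p + ∑ i, v i p * px i (d α) p +
      (∑ A : Finset (Fin m), ∑ I : Finset (Fin n), ∑ i,
        if A.card = I.card ∧ α ∈ A ∧ i ∈ I then
          (-1 : ℝ) ^ (ordIdx A α + ordIdx I i) *
            mf (A.erase α) (I.erase i) p * px i (mf A I) p
        else 0) = 0)
    (eq3 : ∀ p ∈ Ω, ∀ i,
      pt (v i) p +
      (∑ A : Finset (Fin m), ∑ I : Finset (Fin n), ∑ j,
        if A.card = I.card ∧ j ∈ I ∧ i ∉ I.erase j then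
          (-1 : ℝ) ^ (ordIdx I j + ordIdx (I.erase j) i) *
            mf A (insert i (I.erase j)) p * px j (mf A I) p
        else 0) -
      (∑ A : Finset (Fin m), ∑ I : Finset (Fin n),
        if A.card = I.card ∧ 1 ≤ A.card then mf A I p * px i (mf A I) p else 0) +
      ∑ j, v j p * px j (v i) p - τ p * px i τ p = 0)
    (eq4 : ∀ p ∈ Ω, ∀ (A : Finset (Fin m)) (I : Finset (Fin n)),
      A.card = I.card → 1 ≤ A.card →
      pt (mf A I) p + ∑ j, v j p * px j (mf A I) p +
      (∑ i, ∑ j, if i ∈ I ∧ j ∉ I.erase i then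
          (-1 : ℝ) ^ (ordIdx (I.erase i) j + ordIdx I i) *
            mf A (insert j (I.erase i)) p * px i (v j) p
        else 0) -
      mf A I p * ∑ j, px j (v j) p +
      (∑ α, ∑ i, if α ∈ A ∧ i ∈ I then
          (-1 : ℝ) ^ (ordIdx A α + ordIdx I i) *
            mf (A.erase α) (I.erase i) p * px i (d α) p
        else 0) = 0)
    (lam : ℝ × (Fin n → ℝ) → ℝ)
    (hlam : lam = fun q => (1 / 2) * ((τ q) ^ 2 + ∑ i, (v i q) ^ 2 + ∑ α, (d α q) ^ 2 +
      (∑ A : Finset (Fin m), ∑ I : Finset (Fin n),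
        if A.card = I.card ∧ 1 ≤ A.card then (mf A I q) ^ 2 else 0) - 1))
    (ω : Fin n → ℝ × (Fin n → ℝ) → ℝ)
    (hω : ∀ i, ω i = fun q => τ q * v i q - ∑ α, mf {α} {i} q * d α q)
    (ψ : Fin n → Finset (Fin m) → Finset (Fin n) → ℝ × (Fin n → ℝ) → ℝ)
    (hψ : ∀ i A I, ψ i A I = fun q =>
      (∑ α ∈ A, (-1 : ℝ) ^ (ordIdx A α + ordIdx I i) * mf (A.erase α) I q * mf {α} {i} q)
      - (if i ∈ I then 0 else τ q * mf A (insert i I) q)) :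
    ∀ p ∈ Ω, ∀ i,
      pt (ω i) p =
        ω i p * (∑ j, px j (v j) p) - (∑ j, ω j p * px i (v j) p)
        - (∑ j, v j p * px j (ω i) p) + τ p * px i lam p
        + (∑ A : Finset (Fin m), ∑ I : Finset (Fin n), ∑ j,
            if A.card = I.card ∧ j ∈ I then
              (-1 : ℝ) ^ (ordIdx I j + ordIdx (I.erase j) i) *
                px j (mf A I) p * ψ i A (I.erase j) p
            else 0) := by
  intro p hp i
  have hdiff : ∀ {f : ℝ × (Fin n → ℝ) → ℝ}, ContDiffOn ℝ (⊤ : ℕ∞) f Ω → DifferentiableAt ℝ f p :=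
    fun hf => (hf.contDiffAt (hΩ.mem_nhds hp)).differentiableAt (by simp)
  set M := fun A I => mf A I p
  set DM := fun j A I => px j (mf A I) p
  set div := ∑ j, px j (v j) p
  set K := ∑ A : Finset (Fin m), ∑ I : Finset (Fin n),
    if A.card = I.card ∧ 1 ≤ A.card then mf A I p * px i (mf A I) p else 0
  have Lm : ∀ α, materialDeriv v (mf {α} {i}) p =
      mf {α} {i} p * div - ∑ j, mf {α} {j} p * px i (v j) p - τ p * px i (d α) p := fun α => by
    have h := eq4 p hp {α} {i} (by simp) (by simp)
    rw [sum_transport_singleton (fun I => mf {α} I p) (fun i' j => px i' (v j) p),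
      sum_source_singleton M (fun α' i' => px i' (d α') p)] at h
    simp only [M, hmempty] at h
    rw [materialDeriv_eq_pt_add_sum]; linear_combination h
  have Lω := materialDeriv_omega (m₁ := fun α j => mf {α} {j}) i (div := div) (K := K)
    (C := vCoupling M DM i) (c := dCoupling M DM) (hdiff hτ) (hdiff (hv i))
    (fun α => hdiff (hd α)) (fun α => hdiff (hmf _ _))
    (by rw [materialDeriv_eq_pt_add_sum]; linear_combination eq1 p hp)
    (by rw [materialDeriv_eq_pt_add_sum]; linear_combination eq3 p hp i)
    (fun α => by rw [materialDeriv_eq_pt_add_sum]; linear_combination eq2 p hp α) Lm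
  have hlam_px : px i lam p = τ p * px i τ p + ∑ j, v j p * px i (v j) p
      + ∑ α, d α p * px i (d α) p + K := by
    rw [hlam]
    exact fderiv_half_sum_sq_sub_one_apply (hdiff hτ) (fun α => hdiff (hd α))
      (fun j => hdiff (hv j)) (fun A I => hdiff (hmf A I)) _
  obtain rfl : ω = _ := funext hω
  simp only [hψ]
  rw [sum_sign_mul_psi_eq M DM (τ p) i, hlam_px, sum_sub_sum_mul_mul]
  linear_combination (materialDeriv_eq_pt_add_sum _).symm + Lω
end
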